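/- arXiv:1302.6960 — 2 statements merged into one kernel-verified Lean document; each statement's English description precedes it below -/
import Mathlib

section
/- Let E be a flat theory over a ranked signature Σ, and let s = f(s1,…,sn), t = g(t1,…,tm), s' = f(s1',…,sn') and t' = g(t1',…,tm') be ground terms over Σ such that: (i) for each i ∈ {1,…,n}, s_i is a constant iff s_i' is a constant, and if both are constants then s_i =_E s_i'; (ii) for each j ∈ {1,…,m}, t_j is a constant iff t_j' is a constant, and if both are constants then t_j =_E t_j'; (iii) for each i ∈ {1,…,n} and j ∈ {1,…,m}, s_i' =_E t_j' holds iff s_i =_E t_j holds. Then s =_E t holds iff s' =_E t' holds. -/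
set_option maxHeartbeats 1000000

namespace TreeAut

/-! ### Ranked terms -/

/-- Ranked terms over a symbol type `F` (arities are imposed by well-formedness). -/
inductive RTerm (F : Type) : Type
  | node : F → List (RTerm F) → RTerm F

namespace RTerm

def rootLabel {F : Type} : RTerm F → F
  | .node f _ => f

/-- `SubAt t p s` : the subterm of `t` at position `p` is `s`. -/
inductive SubAt {F : Type} : RTerm F → List ℕ → RTerm F → Prop
  | refl (t : RTerm F) : SubAt t [] t
  | step {f : F} {ts : List (RTerm F)} {i : ℕ} {u s : RTerm F} {p : List ℕ} :
      ts[i]? = some u → SubAt u p s → SubAt (RTerm.node f ts) (i :: p) s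

/-- `p` is a position of `t`. -/
def IsPos {F : Type} (t : RTerm F) (p : List ℕ) : Prop := ∃ s, SubAt t p s

/-- `ReplAt t p s t'` : `t'` is the result of replacing in `t` the subterm at `p` by `s`. -/
inductive ReplAt {F : Type} : RTerm F → List ℕ → RTerm F → RTerm F → Prop
  | here (t s : RTerm F) : ReplAt t [] s s
  | step {f : F} {ts : List (RTerm F)} {i : ℕ} {u u' s : RTerm F} {p : List ℕ} :
      ts[i]? = some u → ReplAt u p s u' →
      ReplAt (RTerm.node f ts) (i :: p) s (RTerm.node f (ts.set i u'))

/-- Height of a term: the maximal length of a position. -/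
def height {F : Type} : RTerm F → ℕ
  | .node _ [] => 0
  | .node f (t :: ts) => max (height t + 1) (height (RTerm.node f ts))

/-- Well-formedness of a term with respect to an arity function. -/
inductive WF {F : Type} (ar : F → ℕ) : RTerm F → Prop
  | node {f : F} {ts : List (RTerm F)} :
      ts.length = ar f → (∀ u ∈ ts, WF ar u) → WF ar (RTerm.node f ts)

/-- A constant, i.e. a term reduced to a symbol (of arity 0). -/
def IsConst {F : Type} (t : RTerm F) : Prop := ∃ c : F, t = RTerm.node c []

/-- Relabeling of a term. -/
def map {F G : Type} (g : F → G) : RTerm F → RTerm G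
  | .node f ts => RTerm.node (g f) (ts.attach.map (fun u => map g u.1))
decreasing_by
  simp only [RTerm.node.sizeOf_spec]
  have := List.sizeOf_lt_of_mem u.2
  omega

end RTerm

/-! ### Patterns (terms with variables) and flat equational theories -/

/-- Terms with variables (variables are natural numbers). -/
inductive Pat (F : Type) : Type
  | var : ℕ → Pat F
  | node : F → List (Pat F) → Pat F

namespace Pat

def subst {F : Type} (σ : ℕ → RTerm F) : Pat F → RTerm F
  | .var v => σ v
  | .node f ps => RTerm.node f (ps.attach.map (fun p => subst σ p.1))
decreasing_by
  simp only [Pat.node.sizeOf_spec]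
  have := List.sizeOf_lt_of_mem p.2
  omega

def height {F : Type} : Pat F → ℕ
  | .var _ => 0
  | .node _ [] => 0
  | .node f (p :: ps) => max (height p + 1) (height (Pat.node f ps))

inductive HasVar {F : Type} (v : ℕ) : Pat F → Prop
  | var : HasVar v (Pat.var v)
  | node {f : F} {ps : List (Pat F)} {p : Pat F} :
      p ∈ ps → HasVar v p → HasVar v (Pat.node f ps)

inductive WF {F : Type} (ar : F → ℕ) : Pat F → Prop
  | var (v : ℕ) : WF ar (Pat.var v)
  | node {f : F} {ps : List (Pat F)} :
      ps.length = ar f → (∀ p ∈ ps, WF ar p) → WF ar (Pat.node f ps)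

end Pat

/-- A flat equation: both sides well-formed, of the same height which is at most 1,
and with the same variables. -/
def IsFlatEq {F : Type} (ar : F → ℕ) (e : Pat F × Pat F) : Prop :=
  e.1.WF ar ∧ e.2.WF ar ∧ e.1.height = e.2.height ∧ e.1.height ≤ 1 ∧
  (∀ v : ℕ, Pat.HasVar v e.1 ↔ Pat.HasVar v e.2)

/-- One rewrite step using an equation of `E` (in either direction) at some position. -/
def Rew {F : Type} (E : List (Pat F × Pat F)) (s t : RTerm F) : Prop :=
  ∃ l r : Pat F, ((l, r) ∈ E ∨ (r, l) ∈ E) ∧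
    ∃ (σ : ℕ → RTerm F) (p : List ℕ),
      RTerm.SubAt s p (l.subst σ) ∧ RTerm.ReplAt s p (r.subst σ) t

/-- Equivalence modulo the set of equations `E`. -/
def EqE {F : Type} (E : List (Pat F × Pat F)) : RTerm F → RTerm F → Prop :=
  Relation.ReflTransGen (Rew E)

/-! ### Global constraints -/

/-- Transition rule of a tree automaton with constraints between brothers:
`sym(args) → res` with brother equalities `bcEq` and disequalities `bcNeq`
(1-based indices of children). -/
structure Rule (F Q : Type) where
  sym : F
  args : List Q
  bcEq : List (ℕ × ℕ)
  bcNeq : List (ℕ × ℕ)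
  res : Q

/-- Atomic global constraints: `q ≈ q'`, `q ≉ q'`, and linear inequalities
`Σ c·|q| ≥ a` (type `|.|`) and `Σ c·‖q‖ ≥ a` (type `‖.‖`). -/
inductive GAtom (Q : Type) : Type
  | eq : Q → Q → GAtom Q
  | neq : Q → Q → GAtom Q
  | cnt : List (ℤ × Q) → ℤ → GAtom Q
  | cls : List (ℤ × Q) → ℤ → GAtom Q

/-- Boolean combinations of atomic global constraints. -/
inductive GC (Q : Type) : Type
  | tt : GC Q
  | ff : GC Q
  | atom : GAtom Q → GC Q
  | and : GC Q → GC Q → GC Q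
  | or : GC Q → GC Q → GC Q
  | not : GC Q → GC Q

/-- The set of `=E`-equivalence classes of members of a set of terms. -/
def classesOf {F : Type} (E : List (Pat F × Pat F)) (S : Set (RTerm F)) :
    Set (Set (RTerm F)) :=
  {C | ∃ t ∈ S, C = {u | EqE E t u}}

section Sat

variable {β F Q : Type}

/-- Positions of a (run) tree where the node has state `q`
(`st` extracts the state of a node label). -/
def stPos (st : β → Q) (r : RTerm β) (q : Q) : Set (List ℕ) :=
  {p | ∃ s, RTerm.SubAt r p s ∧ st s.rootLabel = q}

/-- `⟦|q|⟧` : the number of positions with state `q`. -/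
noncomputable def stCount (st : β → Q) (r : RTerm β) (q : Q) : ℕ :=
  (stPos st r q).ncard

/-- Terms occurring below positions with state `q`. -/
def stTerms (st : β → Q) (sy : β → F) (r : RTerm β) (q : Q) : Set (RTerm F) :=
  {t | ∃ p s, RTerm.SubAt r p s ∧ st s.rootLabel = q ∧ s.map sy = t}

/-- `⟦‖q‖⟧` : the number of `=E`-classes of terms at positions with state `q`. -/
noncomputable def clsCount (E : List (Pat F × Pat F)) (st : β → Q) (sy : β → F)
    (r : RTerm β) (q : Q) : ℕ :=
  (classesOf E (stTerms st sy r q)).ncard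

/-- Satisfaction of a global atomic constraint by a run tree. -/
def satAtom (E : List (Pat F × Pat F)) (st : β → Q) (sy : β → F) (r : RTerm β) :
    GAtom Q → Prop
  | .eq q q' => ∀ p p' s s', p ≠ p' → RTerm.SubAt r p s → RTerm.SubAt r p' s' →
      st s.rootLabel = q → st s'.rootLabel = q' → EqE E (s.map sy) (s'.map sy)
  | .neq q q' => ∀ p p' s s', p ≠ p' → RTerm.SubAt r p s → RTerm.SubAt r p' s' →
      st s.rootLabel = q → st s'.rootLabel = q' → ¬ EqE E (s.map sy) (s'.map sy)
  | .cnt l a => a ≤ (l.map (fun cq => cq.1 * (stCount st r cq.2 : ℤ))).sum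
  | .cls l a => a ≤ (l.map (fun cq => cq.1 * (clsCount E st sy r cq.2 : ℤ))).sum

/-- Satisfaction of a global constraint by a run tree. -/
def satGC (E : List (Pat F × Pat F)) (st : β → Q) (sy : β → F) (r : RTerm β) :
    GC Q → Prop
  | .tt => True
  | .ff => False
  | .atom a => satAtom E st sy r a
  | .and c d => satGC E st sy r c ∧ satGC E st sy r d
  | .or c d => satGC E st sy r c ∨ satGC E st sy r d
  | .not c => ¬ satGC E st sy r c

end Sat

/-! ### Tree automata with global and brother constraints modulo a flat theory -/

/-- A run is represented as a tree labeled by the rules applied at each position. -/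
abbrev Run (F Q : Type) := RTerm (Rule F Q)

def Run.state {F Q : Type} (r : Run F Q) : Q := (RTerm.rootLabel r).res
def Run.term {F Q : Type} (r : Run F Q) : RTerm F := r.map Rule.sym

/-- `r` is a structurally correct run using rules of `Δ`, whose local brother
constraints are satisfied modulo `E`. -/
inductive IsRun {F Q : Type} (Δ : List (Rule F Q)) (E : List (Pat F × Pat F)) :
    Run F Q → Prop
  | node {ρ : Rule F Q} {rs : List (Run F Q)} :
      ρ ∈ Δ →
      ρ.args = rs.map Run.state →
      (∀ r ∈ rs, IsRun Δ E r) →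
      (∀ i j ri rj, (i, j) ∈ ρ.bcEq → rs[i - 1]? = some ri →
        rs[j - 1]? = some rj → EqE E ri.term rj.term) →
      (∀ i j ri rj, (i, j) ∈ ρ.bcNeq → rs[i - 1]? = some ri →
        rs[j - 1]? = some rj → ¬ EqE E ri.term rj.term) →
      IsRun Δ E (RTerm.node ρ rs)

/-- Tree automaton with brother constraints and global constraints modulo a flat theory. -/
structure TABG (F Q : Type) where
  arity : F → ℕ
  stQ : Finset Q
  rules : List (Rule F Q)
  final : List Q
  eqs : List (Pat F × Pat F)
  gc : GC Q

def TABG.IsAccRun {F Q : Type} (A : TABG F Q) (r : Run F Q) : Prop :=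
  IsRun A.rules A.eqs r ∧ satGC A.eqs Rule.res Rule.sym r A.gc ∧ r.state ∈ A.final

def TABG.Lang {F Q : Type} (A : TABG F Q) : Set (RTerm F) :=
  {t | ∃ r : Run F Q, A.IsAccRun r ∧ r.term = t}

def Rule.WFr {F Q : Type} (ar : F → ℕ) (S : Finset Q) (ρ : Rule F Q) : Prop :=
  ρ.args.length = ar ρ.sym ∧ ρ.res ∈ S ∧ (∀ q ∈ ρ.args, q ∈ S) ∧
  (∀ ij ∈ ρ.bcEq, 1 ≤ ij.1 ∧ ij.1 ≤ ρ.args.length ∧ 1 ≤ ij.2 ∧ ij.2 ≤ ρ.args.length) ∧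
  (∀ ij ∈ ρ.bcNeq, 1 ≤ ij.1 ∧ ij.1 ≤ ρ.args.length ∧ 1 ≤ ij.2 ∧ ij.2 ≤ ρ.args.length)

/-- Well-formedness of a TABG: the equational theory is flat, the rules respect
the arities and the state set, and final states belong to the state set. -/
def TABG.WF {F Q : Type} (A : TABG F Q) : Prop :=
  (∀ e ∈ A.eqs, IsFlatEq A.arity e) ∧
  (∀ ρ ∈ A.rules, ρ.WFr A.arity A.stQ) ∧
  (∀ q ∈ A.final, q ∈ A.stQ)

/-! ### Classes of constraints -/

def GAtom.IsEqNeq {Q : Type} : GAtom Q → Prop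
  | .eq _ _ => True
  | .neq _ _ => True
  | .cnt _ _ => False
  | .cls _ _ => False

/-- All coefficients and the constant have the same sign. -/
def sameSign (l : List ℤ) (a : ℤ) : Prop :=
  ((∀ c ∈ l, 0 ≤ c) ∧ 0 ≤ a) ∨ ((∀ c ∈ l, c ≤ 0) ∧ a ≤ 0)

/-- eq/neq atoms and *natural* linear inequalities. -/
def GAtom.IsNat {Q : Type} : GAtom Q → Prop
  | .eq _ _ => True
  | .neq _ _ => True
  | .cnt l a => sameSign (l.map Prod.fst) a
  | .cls l a => sameSign (l.map Prod.fst) a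

/-- eq/neq atoms and natural linear inequalities over the `|q|` only. -/
def GAtom.IsNatCnt {Q : Type} : GAtom Q → Prop
  | .eq _ _ => True
  | .neq _ _ => True
  | .cnt l a => sameSign (l.map Prod.fst) a
  | .cls _ _ => False

def GC.AtomsAre {Q : Type} (P : GAtom Q → Prop) : GC Q → Prop
  | .tt => True
  | .ff => True
  | .atom a => P a
  | .and c d => GC.AtomsAre P c ∧ GC.AtomsAre P d
  | .or c d => GC.AtomsAre P c ∧ GC.AtomsAre P d
  | .not c => GC.AtomsAre P c

/-- Positive conjunctive constraint: a conjunction of atoms. -/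
def GC.IsConjAtoms {Q : Type} : GC Q → Prop
  | .tt => True
  | .ff => False
  | .atom _ => True
  | .and c d => GC.IsConjAtoms c ∧ GC.IsConjAtoms d
  | .or _ _ => False
  | .not _ => False

/-- A literal: an atom (with natural arithmetic atoms) or the negation of an
eq/neq atom. -/
def GC.IsLit {Q : Type} : GC Q → Prop
  | .atom a => GAtom.IsNat a
  | .not (.atom (.eq _ _)) => True
  | .not (.atom (.neq _ _)) => True
  | _ => False

def GC.IsConjLit {Q : Type} : GC Q → Prop
  | .and c d => GC.IsConjLit c ∧ GC.IsConjLit d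
  | c => GC.IsLit c

def GC.IsDNF {Q : Type} : GC Q → Prop
  | .or c d => GC.IsDNF c ∧ GC.IsDNF d
  | c => GC.IsConjLit c

/-- Normalized constraint: `true`, `false`, or a disjunction of conjunctions of
literals in which all arithmetic literals are positive. -/
def GC.Normalized {Q : Type} (c : GC Q) : Prop :=
  c = GC.tt ∨ c = GC.ff ∨ GC.IsDNF c

/-- No reflexive disequality constraints (the TAGED restriction). -/
def GC.NoReflNeq {Q : Type} : GC Q → Prop :=
  GC.AtomsAre (fun a => match a with
    | .neq q q' => q ≠ q'
    | _ => True)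

def conjList {Q : Type} : List (GC Q) → GC Q
  | [] => GC.tt
  | [c] => c
  | c :: cs => GC.and c (conjList cs)

def disjList {Q : Type} : List (GC Q) → GC Q
  | [] => GC.ff
  | [c] => c
  | c :: cs => GC.or c (disjList cs)

/-- No local constraints between brothers. -/
def TABG.NoBrother {F Q : Type} (A : TABG F Q) : Prop :=
  ∀ ρ ∈ A.rules, ρ.bcEq = [] ∧ ρ.bcNeq = []

/-- A TAG: empty equational theory and no brother constraints. -/
def TABG.IsTAG {F Q : Type} (A : TABG F Q) : Prop := A.eqs = [] ∧ A.NoBrother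

/-- A plain tree automaton: a TAG with trivial global constraint. -/
def TABG.IsTA {F Q : Type} (A : TABG F Q) : Prop := A.IsTAG ∧ A.gc = GC.tt

/-! ### Synonym states -/

section Syn

variable {F Q : Type} [DecidableEq Q]

/-- Possible replacements of a state occurrence: `q̄` may stay or become `q̂`. -/
def replS (qb qh q : Q) : List Q := if q = qb then [qb, qh] else [q]

/-- Replacement of every occurrence of `|q̄|` (resp. `‖q̄‖`) by `|q̄| + |q̂|`
(resp. `‖q̄‖ + ‖q̂‖`) in a linear expression. -/
def linRepl (qb qh : Q) (l : List (ℤ × Q)) : List (ℤ × Q) :=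
  l.flatMap (fun cq => (replS qb qh cq.2).map (fun q' => (cq.1, q')))

/-- Literal transformation on positive atoms. -/
def synAtom (qb qh : Q) : GAtom Q → GC Q
  | .eq q1 q2 => conjList ((replS qb qh q1).flatMap (fun a =>
      (replS qb qh q2).map (fun b => GC.atom (GAtom.eq a b))))
  | .neq q1 q2 => conjList ((replS qb qh q1).flatMap (fun a =>
      (replS qb qh q2).map (fun b => GC.atom (GAtom.neq a b))))
  | .cnt l a => GC.atom (GAtom.cnt (linRepl qb qh l) a)
  | .cls l a => GC.atom (GAtom.cls (linRepl qb qh l) a)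

/-- The literal transformation `Ĉ` of (a normalized) constraint, for `q̄ ↝ q̂`. -/
def GC.synTrans (qb qh : Q) : GC Q → GC Q
  | .tt => .tt
  | .ff => .ff
  | .atom a => synAtom qb qh a
  | .not (.atom (.eq q1 q2)) => disjList ((replS qb qh q1).flatMap (fun a =>
      (replS qb qh q2).map (fun b => GC.not (GC.atom (GAtom.eq a b)))))
  | .not (.atom (.neq q1 q2)) => disjList ((replS qb qh q1).flatMap (fun a =>
      (replS qb qh q2).map (fun b => GC.not (GC.atom (GAtom.neq a b)))))
  | .not c => GC.not (GC.synTrans qb qh c)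
  | .and c d => GC.and (GC.synTrans qb qh c) (GC.synTrans qb qh d)
  | .or c d => GC.or (GC.synTrans qb qh c) (GC.synTrans qb qh d)

/-- All rules obtained from `ρ` by all possible replacements of occurrences of
`q̄` by `q̂`. -/
def Rule.synVars (qb qh : Q) (ρ : Rule F Q) : List (Rule F Q) :=
  (ρ.args.mapM (replS qb qh)).flatMap (fun args' =>
    (replS qb qh ρ.res).map (fun res' =>
      { sym := ρ.sym, args := args', bcEq := ρ.bcEq, bcNeq := ρ.bcNeq, res := res' }))

/-- `F_{q̄↝q̂}` on the list of final states. -/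
def finSyn (qb qh : Q) (l : List Q) : List Q := if qb ∈ l then qh :: l else l

/-- The constraint `‖q‖ = k`. -/
def clsEqC (q : Q) (k : ℤ) : GC Q :=
  GC.and (GC.atom (GAtom.cls [(1, q)] k)) (GC.atom (GAtom.cls [(-1, q)] (-k)))

/-- The automaton `A_{q̄↝q̂}`. -/
def TABG.synonym (A : TABG F Q) (qb qh : Q) : TABG F Q :=
  { arity := A.arity
    stQ := insert qh A.stQ
    rules := A.rules.flatMap (Rule.synVars qb qh)
    final := finSyn qb qh A.final
    eqs := A.eqs
    gc := GC.and
      (GC.or (GC.and (clsEqC qb 0) (clsEqC qh 0))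
             (GC.and (clsEqC qh 1) (GC.atom (GAtom.neq qb qh))))
      (GC.synTrans qb qh A.gc) }

end Syn

/-! ### Removal of the counting constraints `|q|` : the automaton `A_¬ℕ` -/

def GC.cntAtoms {Q : Type} : GC Q → List (List (ℤ × Q) × ℤ)
  | .atom (.cnt l a) => [(l, a)]
  | .and c d => GC.cntAtoms c ++ GC.cntAtoms d
  | .or c d => GC.cntAtoms c ++ GC.cntAtoms d
  | .not c => GC.cntAtoms c
  | _ => []

def GC.eqAtoms {Q : Type} : GC Q → List (Q × Q)
  | .atom (.eq q q') => [(q, q')]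
  | .and c d => GC.eqAtoms c ++ GC.eqAtoms d
  | .or c d => GC.eqAtoms c ++ GC.eqAtoms d
  | .not c => GC.eqAtoms c
  | _ => []

def GC.neqAtoms {Q : Type} : GC Q → List (Q × Q)
  | .atom (.neq q q') => [(q, q')]
  | .and c d => GC.neqAtoms c ++ GC.neqAtoms d
  | .or c d => GC.neqAtoms c ++ GC.neqAtoms d
  | .not c => GC.neqAtoms c
  | _ => []

/-- `max_A` : one plus the maximal constant occurring in the counting literals. -/
def GC.maxConst {Q : Type} (c : GC Q) : ℕ :=
  1 + ((c.cntAtoms.map (fun la => la.2.natAbs)).foldr max 0)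

/-- Truncated sum of two mappings `Q → {0,…,m}`. -/
def msumF {Q : Type} {m : ℕ} (M1 M2 : Q → Fin (m + 1)) : Q → Fin (m + 1) :=
  fun q => ⟨min ((M1 q : ℕ) + (M2 q : ℕ)) m, Nat.lt_succ_of_le (Nat.min_le_right _ _)⟩

/-- The mapping `M_q`. -/
def unitMap {Q : Type} [DecidableEq Q] (m : ℕ) (q : Q) : Q → Fin (m + 1) :=
  fun q' => if q' = q then ⟨min 1 m, Nat.lt_succ_of_le (Nat.min_le_right _ _)⟩
            else ⟨0, Nat.succ_pos m⟩

/-- Value of a linear expression under a mapping. -/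
def lvalF {Q : Type} {m : ℕ} (M : Q → Fin (m + 1)) (l : List (ℤ × Q)) : ℤ :=
  (l.map (fun cq => cq.1 * ((M cq.2 : ℕ) : ℤ))).sum

/-- All variants of a rule, decorated with occurrence-counting mappings. -/
noncomputable def Rule.notNVars {F Q : Type} [Fintype Q] [DecidableEq Q] (m : ℕ) (ρ : Rule F Q) :
    List (Rule F (Q × (Q → Fin (m + 1)))) :=
  ((ρ.args.mapM (fun q =>
      ((Finset.univ : Finset (Q → Fin (m + 1))).toList).map (fun M => (q, M))))).map
    (fun args' =>
      { sym := ρ.sym, args := args', bcEq := ρ.bcEq, bcNeq := ρ.bcNeq,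
        res := (ρ.res, (args'.map Prod.snd).foldr msumF (unitMap m ρ.res)) })

/-- The automaton `A_¬ℕ`. -/
noncomputable def TABG.notN {F Q : Type} [Fintype Q] [DecidableEq Q] (A : TABG F Q) :
    TABG F (Q × (Q → Fin (A.gc.maxConst + 1))) :=
  { arity := A.arity
    stQ := A.stQ ×ˢ (Finset.univ : Finset (Q → Fin (A.gc.maxConst + 1)))
    rules := A.rules.flatMap (Rule.notNVars A.gc.maxConst)
    final := (A.final.flatMap (fun q =>
        ((Finset.univ : Finset (Q → Fin (A.gc.maxConst + 1))).toList).map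
          (fun M => (q, M)))).filter
        (fun qM => decide (∀ la ∈ A.gc.cntAtoms, la.2 ≤ lvalF qM.2 la.1))
    eqs := A.eqs
    gc := GC.and
      (conjList ((A.gc.eqAtoms).flatMap (fun qq =>
        ((Finset.univ : Finset (Q → Fin (A.gc.maxConst + 1))).toList).flatMap (fun M1 =>
          ((Finset.univ : Finset (Q → Fin (A.gc.maxConst + 1))).toList).map (fun M2 =>
            GC.atom (GAtom.eq (qq.1, M1) (qq.2, M2)))))))
      (conjList ((A.gc.neqAtoms).flatMap (fun qq =>
        ((Finset.univ : Finset (Q → Fin (A.gc.maxConst + 1))).toList).flatMap (fun M1 =>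
          ((Finset.univ : Finset (Q → Fin (A.gc.maxConst + 1))).toList).map (fun M2 =>
            GC.atom (GAtom.neq (qq.1, M1) (qq.2, M2))))))) }

/-! ### Global pumpings -/

section Pump

variable {F Q : Type}

/-- `H_i` : positions of subruns of positive height equal to `i`. -/
def Hset (r : Run F Q) (i : ℕ) : Set (List ℕ) :=
  {p | ∃ s, RTerm.SubAt r p s ∧ 0 < RTerm.height s ∧ RTerm.height s = i}

/-- `Ȟ_i` : positions `p.j` of subruns of positive height `< i` whose parent has
height `> i`. -/
def Hcheck (r : Run F Q) (i : ℕ) : Set (List ℕ) :=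
  {p' | ∃ (p : List ℕ) (j : ℕ) (s s' : Run F Q), p' = p ++ [j] ∧
    RTerm.SubAt r p s ∧ RTerm.SubAt r p' s' ∧
    0 < RTerm.height s' ∧ RTerm.height s' < i ∧ i < RTerm.height s}

/-- `H̊_i` : positions `p.j` of subruns of height `0` (with `0 < i`) whose parent
has height `> i`. -/
def Hring (r : Run F Q) (i : ℕ) : Set (List ℕ) :=
  {p' | ∃ (p : List ℕ) (j : ℕ) (s s' : Run F Q), p' = p ++ [j] ∧
    RTerm.SubAt r p s ∧ RTerm.SubAt r p' s' ∧
    RTerm.height s' = 0 ∧ 0 < i ∧ i < RTerm.height s}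

def Dom (r : Run F Q) (i : ℕ) : Set (List ℕ) := Hset r i ∪ Hcheck r i ∪ Hring r i

/-- A pump-injection `I : (H_i ∪ Ȟ_i ∪ H̊_i) → (H_j ∪ Ȟ_j ∪ H̊_j)`. -/
structure PumpInj (E : List (Pat F × Pat F)) (r : Run F Q) (i j : ℕ)
    (I : List ℕ → List ℕ) : Prop where
  inj : Set.InjOn I (Dom r i)
  mapsH : Set.MapsTo I (Hset r i) (Hset r j)
  mapsHc : Set.MapsTo I (Hcheck r i) (Hcheck r j)
  mapsHr : Set.MapsTo I (Hring r i) (Hring r j)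
  idRing : ∀ p ∈ Hring r i, I p = p
  stPres : ∀ p ∈ Dom r i, ∀ s s', RTerm.SubAt r p s → RTerm.SubAt r (I p) s' →
    Run.state s = Run.state s'
  eqPres : ∀ p1 p2, p1 ∈ Dom r i → p2 ∈ Dom r i →
    ∀ s1 s2 s1' s2', RTerm.SubAt r p1 s1 → RTerm.SubAt r p2 s2 →
      RTerm.SubAt r (I p1) s1' → RTerm.SubAt r (I p2) s2' →
      (EqE E (Run.term s1) (Run.term s2) ↔ EqE E (Run.term s1') (Run.term s2'))

/-- Simultaneous replacement at all positions of `D` (which are assumed to be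
pairwise parallel): at a position of `D` the subtree is replaced by a tree
allowed by `ρ`, elsewhere the tree is kept. -/
inductive MultiRepl {β : Type} (D : Set (List ℕ)) (ρ : List ℕ → RTerm β → Prop) :
    List ℕ → RTerm β → RTerm β → Prop
  | here {p : List ℕ} {t t' : RTerm β} : p ∈ D → ρ p t' → MultiRepl D ρ p t t'
  | node {p : List ℕ} {f : β} {ts ts' : List (RTerm β)} :
      p ∉ D → ts.length = ts'.length →
      (∀ k u u', ts[k]? = some u → ts'[k]? = some u' →
        MultiRepl D ρ (p ++ [k]) u u') →
      MultiRepl D ρ p (RTerm.node f ts) (RTerm.node f ts')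

/-- `r'` is the global pumping on `r` with indexes `i,j` and injection `I`. -/
def IsGlobalPumpingWith (E : List (Pat F × Pat F)) (r : Run F Q) (i j : ℕ)
    (I : List ℕ → List ℕ) (r' : Run F Q) : Prop :=
  PumpInj E r i j I ∧
  MultiRepl (Dom r i) (fun p s => RTerm.SubAt r (I p) s) [] r r'

/-- The `=E`-classes of the subterms at positions of `P`. -/
def classesAt (E : List (Pat F × Pat F)) (r : Run F Q) (P : Set (List ℕ)) :
    Set (Set (RTerm F)) :=
  classesOf E {t | ∃ p ∈ P, ∃ s, RTerm.SubAt r p s ∧ Run.term s = t}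

/-- The tuple `r_{t,P}` of a class `C`, as a function on states. -/
noncomputable def tupleAt (r : Run F Q) (P : Set (List ℕ)) (C : Set (RTerm F))
    (q : Q) : ℕ :=
  {p | p ∈ P ∧ ∃ s, RTerm.SubAt r p s ∧ Run.state s = q ∧ Run.term s ∈ C}.ncard

/-- The multiset ordering `r_P ≤ r_{P'}` : an injection on classes which is
dominating on the associated tuples. -/
def MsetLE (E : List (Pat F × Pat F)) (r : Run F Q) (P P' : Set (List ℕ)) : Prop :=
  ∃ φ : Set (RTerm F) → Set (RTerm F),
    Set.InjOn φ (classesAt E r P) ∧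
    Set.MapsTo φ (classesAt E r P) (classesAt E r P') ∧
    ∀ C ∈ classesAt E r P, ∀ q, tupleAt r P C q ≤ tupleAt r P' (φ C) q

end Pump

/-! ### Multisets of tuples of naturals (for the well quasi-ordering) -/

def TupLE {n : ℕ} (x y : Fin n → ℕ) : Prop := ∀ k, x k ≤ y k

/-- Multiset ordering: an injection mapping each element to a dominating one. -/
def MLE {n : ℕ} (S T : Multiset (Fin n → ℕ)) : Prop :=
  ∃ T' : Multiset (Fin n → ℕ), T' ≤ T ∧ Multiset.Rel TupLE S T'

def msumT {n : ℕ} (S : Multiset (Fin n → ℕ)) : ℕ :=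
  (S.map (fun x => ∑ k, x k)).sum

/-! ### Hedge automata with global constraints, and currying -/

/-- A finite word automaton over the alphabet `Q` (auxiliary states are naturals). -/
structure WordAut (Q : Type) where
  stS : Finset ℕ
  init : ℕ
  final : List ℕ
  trans : List (ℕ × Q × ℕ)

inductive WAccepts {Q : Type} (W : WordAut Q) : ℕ → List Q → Prop
  | nil {s : ℕ} : s ∈ W.final → WAccepts W s []
  | cons {s : ℕ} {q : Q} {s' : ℕ} {w : List Q} :
      (s, q, s') ∈ W.trans → WAccepts W s' w → WAccepts W s (q :: w)

def WordAut.Lang {Q : Type} (W : WordAut Q) (w : List Q) : Prop := WAccepts W W.init w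

/-- Transition rule `a(L) → q` of a hedge automaton. -/
structure HRule (F Q : Type) where
  sym : F
  wa : WordAut Q
  res : Q

/-- Hedge automaton with global constraints, over unranked ordered terms. -/
structure HAG (F Q : Type) where
  stQ : Finset Q
  rules : List (HRule F Q)
  final : List Q
  gc : GC Q

abbrev HRun (F Q : Type) := RTerm (HRule F Q)

def HRun.state {F Q : Type} (r : HRun F Q) : Q := (RTerm.rootLabel r).res
def HRun.term {F Q : Type} (r : HRun F Q) : RTerm F := r.map HRule.sym

inductive IsHRun {F Q : Type} (Δ : List (HRule F Q)) : HRun F Q → Prop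
  | node {ρ : HRule F Q} {rs : List (HRun F Q)} :
      ρ ∈ Δ → ρ.wa.Lang (rs.map HRun.state) →
      (∀ r ∈ rs, IsHRun Δ r) → IsHRun Δ (RTerm.node ρ rs)

def HAG.Lang {F Q : Type} (A : HAG F Q) : Set (RTerm F) :=
  {t | ∃ r : HRun F Q, IsHRun A.rules r ∧
        satGC ([] : List (Pat F × Pat F)) HRule.res HRule.sym r A.gc ∧
        HRun.state r ∈ A.final ∧ HRun.term r = t}

/-- The ranked signature `Σ_@` : symbols of `Σ` become constants, `none` is the
binary symbol `@`. -/
def arAt {F : Type} : Option F → ℕ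
  | none => 2
  | some _ => 0

/-- The `curry` encoding of unranked terms into ranked terms over `Σ_@`. -/
inductive Curried {F : Type} : RTerm F → RTerm (Option F) → Prop
  | base {a : F} : Curried (RTerm.node a []) (RTerm.node (some a) [])
  | step {a : F} {ts : List (RTerm F)} {t : RTerm F} {u v : RTerm (Option F)} :
      Curried (RTerm.node a ts) u → Curried t v →
      Curried (RTerm.node a (ts ++ [t])) (RTerm.node none [u, v])

/-! ### Concrete signatures and languages -/

/-- The signature `{a:0, s:1, f:2}` (resp. `{a:0, g:1, f:2}`): symbol `0` has
arity 0, symbol `1` arity 1, symbol `2` arity 2. -/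
def ar3 : Fin 3 → ℕ := ![0, 1, 2]

/-- `iter1 n` is `s^n(a)` (resp. `g^n(a)`). -/
def iter1 : ℕ → RTerm (Fin 3)
  | 0 => RTerm.node 0 []
  | n + 1 => RTerm.node 1 [iter1 n]

/-- `chain [n1,…,nk] = f(s^{n1}(a), f(s^{n2}(a), …, f(s^{nk}(a), a)…))`. -/
def chain : List ℕ → RTerm (Fin 3)
  | [] => RTerm.node 0 []
  | n :: ns => RTerm.node 2 [iter1 n, chain ns]

/-- The language of chains with pairwise distinct exponents. -/
def LKey : Set (RTerm (Fin 3)) := {t | ∃ ns : List ℕ, ns.Nodup ∧ t = chain ns}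

/-- `bracket [n1,…,nk] = f(g^{n1}(a), f(…, f(g^{n_{k−1}}(a), g^{n_k}(a))…))`. -/
def bracket : List ℕ → RTerm (Fin 3)
  | [] => RTerm.node 0 []
  | [n] => iter1 n
  | n :: ns => RTerm.node 2 [iter1 n, bracket ns]

/-- Every entry has exactly one partner with the same value. -/
def ExactlyOnePartner (ns : List ℕ) : Prop :=
  ∀ i, i < ns.length → ∃! j, j < ns.length ∧ j ≠ i ∧ ns[i]? = ns[j]?

def LDup : Set (RTerm (Fin 3)) :=
  {t | ∃ ns : List ℕ, ns ≠ [] ∧ ExactlyOnePartner ns ∧ t = bracket ns}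

/-! ### Concrete, codable presentations of automata -/

abbrev RuleData := ℕ × List ℕ × List (ℕ × ℕ) × List (ℕ × ℕ) × ℕ
abbrev PatAtomData := ℕ ⊕ ℕ
abbrev FlatSideData := PatAtomData ⊕ (ℕ × List PatAtomData)
abbrev LinData := List (ℤ × ℕ) × ℤ
abbrev GAtomData := (ℕ × ℕ) ⊕ ((ℕ × ℕ) ⊕ (LinData ⊕ LinData))
abbrev GCNodeData := GAtomData ⊕ (ℕ × ℕ × ℕ)
abbrev TABGData :=
  List (ℕ × ℕ) × List RuleData × List ℕ × List (FlatSideData × FlatSideData) ×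
    List GCNodeData

def decodePatAtom : PatAtomData → Pat ℕ
  | Sum.inl v => Pat.var v
  | Sum.inr c => Pat.node c []

def decodeSide : FlatSideData → Pat ℕ
  | Sum.inl a => decodePatAtom a
  | Sum.inr (f, l) => Pat.node f (l.map decodePatAtom)

def decodeGAtom : GAtomData → GAtom ℕ
  | Sum.inl (q, q') => GAtom.eq q q'
  | Sum.inr (Sum.inl (q, q')) => GAtom.neq q q'
  | Sum.inr (Sum.inr (Sum.inl (l, a))) => GAtom.cnt l a
  | Sum.inr (Sum.inr (Sum.inr (l, a))) => GAtom.cls l a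

def decodeGC (nodes : List GCNodeData) : ℕ → ℕ → GC ℕ
  | 0, _ => GC.tt
  | fuel + 1, i =>
    match nodes[i]? with
    | some (Sum.inl a) => GC.atom (decodeGAtom a)
    | some (Sum.inr (op, l, rr)) =>
      if op = 0 then GC.tt
      else if op = 1 then GC.ff
      else if op = 2 then GC.and (decodeGC nodes fuel l) (decodeGC nodes fuel rr)
      else if op = 3 then GC.or (decodeGC nodes fuel l) (decodeGC nodes fuel rr)
      else GC.not (decodeGC nodes fuel l)
    | none => GC.tt

def decodeRule : RuleData → Rule ℕ ℕ
  | (f, args, be, bn, q) => ⟨f, args, be, bn, q⟩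

def decodeArity (sig : List (ℕ × ℕ)) : ℕ → ℕ :=
  fun f => (((sig.find? (fun p => p.1 == f)).map Prod.snd).getD 0)

def dataStates (rules : List RuleData) (final : List ℕ) : Finset ℕ :=
  (rules.flatMap (fun r => r.2.2.2.2 :: r.2.1)).toFinset ∪ final.toFinset

/-- Decoding of a full TABG with arbitrary Boolean global constraint. -/
def decodeTABG (d : TABGData) : TABG ℕ ℕ :=
  { arity := decodeArity d.1
    stQ := dataStates d.2.1 d.2.2.1
    rules := d.2.1.map decodeRule
    final := d.2.2.1
    eqs := d.2.2.2.1.map (fun e => (decodeSide e.1, decodeSide e.2))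
    gc := decodeGC d.2.2.2.2 (d.2.2.2.2).length 0 }

/-- Data for a `TAG^∧[≈]` : signature, rules (no brother constraints), final
states, and a conjunction of equational atoms `q ≈ q'`. -/
abbrev TAGCEData := List (ℕ × ℕ) × List (ℕ × List ℕ × ℕ) × List ℕ × List (ℕ × ℕ)

def decodeTAGCE (d : TAGCEData) : TABG ℕ ℕ :=
  { arity := decodeArity d.1
    stQ := (d.2.1.flatMap (fun r => r.2.2 :: r.2.1)).toFinset ∪ d.2.2.1.toFinset
    rules := d.2.1.map (fun r => ⟨r.1, r.2.1, [], [], r.2.2⟩)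
    final := d.2.2.1
    eqs := []
    gc := conjList (d.2.2.2.map (fun qq => GC.atom (GAtom.eq qq.1 qq.2))) }

/-- Data for a `TAG^∧[≈, |.|_ℤ]` : as above plus a conjunction of integer linear
inequalities. -/
abbrev TAGCZData :=
  List (ℕ × ℕ) × List (ℕ × List ℕ × ℕ) × List ℕ × List (ℕ × ℕ) × List LinData

def decodeTAGCZ (d : TAGCZData) : TABG ℕ ℕ :=
  { arity := decodeArity d.1
    stQ := (d.2.1.flatMap (fun r => r.2.2 :: r.2.1)).toFinset ∪ d.2.2.1.toFinset
    rules := d.2.1.map (fun r => ⟨r.1, r.2.1, [], [], r.2.2⟩)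
    final := d.2.2.1
    eqs := []
    gc := conjList
      (d.2.2.2.1.map (fun qq => GC.atom (GAtom.eq qq.1 qq.2)) ++
       d.2.2.2.2.map (fun la => GC.atom (GAtom.cnt la.1 la.2))) }

/-- A tree language over the ranked signature `ar` is regular if it is the
language of a plain tree automaton. -/
def IsRegular (ar : ℕ → ℕ) (L : Set (RTerm ℕ)) : Prop :=
  ∃ (n : ℕ) (B : TABG ℕ (Fin n)), B.arity = ar ∧ B.WF ∧ B.IsTA ∧ B.Lang = L

/-! ### Automata classes as predicates -/

/-- A TAGED: a TAG whose constraint is a conjunction of atoms `q ≈ q'`, `q ≉ q'`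
without reflexive disequalities. -/
def TAGEDCond {F Q : Type} (A : TABG F Q) : Prop :=
  A.IsTAG ∧ A.gc.IsConjAtoms ∧ A.gc.AtomsAre GAtom.IsEqNeq ∧ A.gc.NoReflNeq

/-- A positive conjunctive TAG with eq/neq atoms (`TAG^∧[≈,≉]`). -/
def TAGCwCond {F Q : Type} (A : TABG F Q) : Prop :=
  A.IsTAG ∧ A.gc.IsConjAtoms ∧ A.gc.AtomsAre GAtom.IsEqNeq

end TreeAut

/-!
Flat rewriting maps constants to constants, and a rewrite step at the root only rearranges
variable arguments and exchanges constant arguments for constants. Relate every term `=E` to an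
argument of `s` or `t` with every term `=E` to the argument at the same place in `s'` or `t'`,
and every constant with itself. If `s =E t`, each non-constant argument of `s` is `=E` to an
argument of `t` and conversely, and together with (iii) this makes the relation functional
modulo `E`. A derivation `s →* t` can then be replayed step by step from `s'`, keeping root
symbols equal and arguments related; it ends at a term whose arguments are `=E` to those of `t'`.
-/

namespace List

variable {α β γ : Type*} {R : α → β → Prop}

theorem Forall₂.exists_of_mem_left {l : List α} {l' : List β} (h : Forall₂ R l l') {a : α}
    (ha : a ∈ l) : ∃ b ∈ l', R a b := by
  induction h with
  | nil => simp at ha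
  | cons hab _ ih =>
    rcases mem_cons.1 ha with rfl | ha
    · exact ⟨_, mem_cons_self, hab⟩
    · obtain ⟨b, hb, h⟩ := ih ha
      exact ⟨b, mem_cons_of_mem _ hb, h⟩

theorem Forall₂.set_left {l : List α} {l' : List β} (h : Forall₂ R l l') {i : ℕ} {a b : α}
    (ha : l[i]? = some a) (hab : ∀ c, R a c → R b c) : Forall₂ R (l.set i b) l' := by
  induction h generalizing i with
  | nil => simp at ha
  | cons hxy hrest ih =>
    cases i with
    | zero =>
      obtain rfl : _ = a := by simpa using ha
      exact .cons (hab _ hxy) hrest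
    | succ i => exact .cons hxy (ih (by simpa using ha))

theorem Forall₂.of_forall₂_left {T : α → γ → Prop} {S : β → γ → Prop}
    (hS : ∀ a b c, R a b → T a c → S b c) :
    ∀ {l : List α} {l₁ : List β} {l₂ : List γ}, Forall₂ R l l₁ → Forall₂ T l l₂ → Forall₂ S l₁ l₂
  | _, _, _, .nil, .nil => .nil
  | _, _, _, .cons h₁ t₁, .cons h₂ t₂ => .cons (hS _ _ _ h₁ h₂) (of_forall₂_left hS t₁ t₂)

theorem forall₂_iff_getElem? {l : List α} {l' : List β} :
    Forall₂ R l l' ↔ l.length = l'.length ∧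
      ∀ (k : ℕ) a b, l[k]? = some a → l'[k]? = some b → R a b := by
  simp only [forall₂_iff_zip, mem_iff_getElem?, getElem?_zip_eq_some]
  exact and_congr_right fun _ =>
    ⟨fun h k _ _ ha hb => h ⟨k, ha, hb⟩, fun h _ _ ⟨k, ha, hb⟩ => h k _ _ ha hb⟩

theorem exists_getElem?_eq_some_of_mem {l : List α} {l' : List β} (hlen : l.length = l'.length)
    {a : α} (ha : a ∈ l) : ∃ (k : ℕ) (b : β), l[k]? = some a ∧ l'[k]? = some b := by
  obtain ⟨k, hk⟩ := mem_iff_getElem?.1 ha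
  have : k < l'.length := hlen ▸ (getElem?_eq_some_iff.1 hk).1
  exact ⟨k, l'[k], hk, getElem?_eq_getElem this⟩

end List

namespace TreeAut

variable {F : Type}

namespace RTerm

def args : RTerm F → List (RTerm F)
  | .node _ ts => ts

@[simp] theorem args_node (f : F) (ts : List (RTerm F)) : (node f ts).args = ts := rfl

theorem SubAt.eq_of_nil {s u : RTerm F} (h : SubAt s [] u) : u = s := by
  cases h; rfl

theorem ReplAt.eq_of_nil {s v t : RTerm F} (h : ReplAt s [] v t) : t = v := by
  cases h; rfl

theorem ReplAt.reverse {s t u v : RTerm F} {p : List ℕ} (hr : ReplAt s p v t)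
    (hs : SubAt s p u) : SubAt t p v ∧ ReplAt t p u s := by
  induction hr generalizing u with
  | here => obtain rfl := hs.eq_of_nil; exact ⟨.refl _, .here _ _⟩
  | @step f ts i w w' _ _ hw _ ih =>
    obtain ⟨hi, rfl⟩ := List.getElem?_eq_some_iff.1 hw
    cases hs with
    | step hw' hs =>
      obtain rfl := Option.some.inj (hw'.symm.trans hw)
      obtain ⟨hsub, hrepl⟩ := ih hs
      have hset : (ts.set i w')[i]? = some w' := List.getElem?_set_self hi
      refine ⟨.step hset hsub, ?_⟩
      have := ReplAt.step (f := f) hset hrepl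
      rwa [List.set_set, List.set_getElem_self] at this

end RTerm

namespace Pat

@[simp] theorem subst_var (σ : ℕ → RTerm F) (x : ℕ) : (var x).subst σ = σ x := by
  rw [subst]

@[simp] theorem subst_node (σ : ℕ → RTerm F) (f : F) (ps : List (Pat F)) :
    (node f ps).subst σ = .node f (ps.map (subst σ)) := by
  rw [subst]; simp

theorem height_lt_of_mem {f : F} {ps : List (Pat F)} {p : Pat F} (hp : p ∈ ps) :
    p.height < (node f ps).height := by
  induction ps with
  | nil => simp at hp
  | cons q qs ih =>
    rw [height]
    rcases List.mem_cons.1 hp with rfl | hp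
    · omega
    · have := ih hp; omega

theorem height_node_eq_zero_iff {f : F} {ps : List (Pat F)} :
    (node f ps).height = 0 ↔ ps = [] := by
  refine ⟨fun h => List.eq_nil_iff_forall_not_mem.2 fun p hp => ?_, by rintro rfl; simp [height]⟩
  have := height_lt_of_mem (f := f) hp
  omega

def IsAtom (p : Pat F) : Prop := (∃ x, p = var x) ∨ ∃ c, p = node c []

theorem isAtom_of_mem {f : F} {ps : List (Pat F)} (hle : (node f ps).height ≤ 1) {p : Pat F}
    (hp : p ∈ ps) : p.IsAtom := by
  have := height_lt_of_mem (f := f) hp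
  rcases p with x | ⟨c, _ | ⟨q, qs⟩⟩
  · exact .inl ⟨x, rfl⟩
  · exact .inr ⟨c, rfl⟩
  · have := height_lt_of_mem (f := c) (List.mem_cons_self (a := q) (l := qs))
    omega

theorem hasVar_node_iff {f : F} {ps : List (Pat F)} (hps : ∀ p ∈ ps, p.IsAtom) {x : ℕ} :
    HasVar x (node f ps) ↔ var x ∈ ps := by
  refine ⟨fun h => ?_, fun h => .node h .var⟩
  cases h with
  | node hp hx =>
    rcases hps _ hp with ⟨y, rfl⟩ | ⟨c, rfl⟩
    · cases hx; exact hp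
    · cases hx with | node hq _ => simp at hq

end Pat

inductive FlatShape : Pat F → Pat F → Prop
  | var (x : ℕ) : FlatShape (.var x) (.var x)
  | node {f g : F} {ps qs : List (Pat F)} :
      (∀ p ∈ ps, p.IsAtom) → (∀ q ∈ qs, q.IsAtom) → (ps = [] ↔ qs = []) →
      (∀ x, Pat.var x ∈ ps ↔ Pat.var x ∈ qs) → FlatShape (.node f ps) (.node g qs)

theorem FlatShape.symm {l r : Pat F} (h : FlatShape l r) : FlatShape r l := by
  cases h with
  | var x => exact .var x
  | node hps hqs hnil hvar => exact .node hqs hps hnil.symm fun x => (hvar x).symm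

theorem IsFlatEq.flatShape {ar : F → ℕ} {l r : Pat F} (h : IsFlatEq ar (l, r)) :
    FlatShape l r := by
  obtain ⟨-, -, hheight, hle, hvar⟩ := h
  dsimp only at hheight hle hvar
  rcases l with x | ⟨f, ps⟩
  · rcases r with y | ⟨g, qs⟩
    · obtain rfl : y = x := by cases (hvar x).1 .var; rfl
      exact .var _
    · obtain rfl : qs = [] :=
        Pat.height_node_eq_zero_iff.1 (by simpa [Pat.height] using hheight.symm)
      cases (hvar x).1 .var with | node hq _ => simp at hq
  have hps : ∀ p ∈ ps, p.IsAtom := fun p => Pat.isAtom_of_mem hle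
  rcases r with y | ⟨g, qs⟩
  · have := Pat.height_lt_of_mem (f := f) ((Pat.hasVar_node_iff hps).1 ((hvar y).2 .var))
    simp [Pat.height] at hheight
    omega
  · have hqs : ∀ q ∈ qs, q.IsAtom := fun q => Pat.isAtom_of_mem (hheight ▸ hle)
    refine .node hps hqs ?_ fun x => ?_
    · rw [← Pat.height_node_eq_zero_iff (f := f), ← Pat.height_node_eq_zero_iff (f := g),
        hheight]
    · rw [← Pat.hasVar_node_iff hps (f := f), ← Pat.hasVar_node_iff hqs (f := g), hvar]

theorem flatShape_of_mem {ar : F → ℕ} {E : List (Pat F × Pat F)} (hE : ∀ e ∈ E, IsFlatEq ar e)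
    {l r : Pat F} (hm : (l, r) ∈ E ∨ (r, l) ∈ E) : FlatShape l r :=
  hm.elim (fun h => (hE _ h).flatShape) fun h => (hE _ h).flatShape.symm

section Rewriting

variable {E : List (Pat F × Pat F)} {a b c : RTerm F}

def RootStep (E : List (Pat F × Pat F)) (u v : RTerm F) : Prop :=
  ∃ l r σ, ((l, r) ∈ E ∨ (r, l) ∈ E) ∧ l.subst σ = u ∧ r.subst σ = v

theorem RootStep.rew (h : RootStep E a b) : Rew E a b := by
  obtain ⟨l, r, σ, hm, rfl, rfl⟩ := h
  exact ⟨l, r, hm, σ, [], .refl _, .here _ _⟩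

theorem Rew.node_cases {f : F} {ws : List (RTerm F)} (h : Rew E (.node f ws) b) :
    RootStep E (.node f ws) b ∨
      ∃ i a a', ws[i]? = some a ∧ Rew E a a' ∧ b = .node f (ws.set i a') := by
  obtain ⟨l, r, hm, σ, _ | ⟨i, p⟩, hsub, hrepl⟩ := h
  · exact .inl ⟨l, r, σ, hm, hsub.eq_of_nil, hrepl.eq_of_nil.symm⟩
  · cases hsub with
    | step hw hsub =>
      cases hrepl with
      | step hw' hrepl =>
        obtain rfl := Option.some.inj (hw.symm.trans hw')
        exact .inr ⟨i, _, _, hw, ⟨l, r, hm, σ, p, hsub, hrepl⟩, rfl⟩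

theorem Rew.node_append_cons (h : Rew E a b) (f : F) (pre suf : List (RTerm F)) :
    Rew E (.node f (pre ++ a :: suf)) (.node f (pre ++ b :: suf)) := by
  obtain ⟨l, r, hm, σ, p, hsub, hrepl⟩ := h
  have hget : (pre ++ a :: suf)[pre.length]? = some a := by simp
  refine ⟨l, r, hm, σ, pre.length :: p, .step hget hsub, ?_⟩
  simpa using RTerm.ReplAt.step (f := f) hget hrepl

theorem Rew.symm (h : Rew E a b) : Rew E b a := by
  obtain ⟨l, r, hm, σ, p, hsub, hrepl⟩ := h
  obtain ⟨hsub', hrepl'⟩ := hrepl.reverse hsub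
  exact ⟨r, l, hm.symm, σ, p, hsub', hrepl'⟩

theorem Rew.eqE (h : Rew E a b) : EqE E a b := .single h

theorem EqE.refl (a : RTerm F) : EqE E a a := Relation.ReflTransGen.refl

theorem EqE.trans (h₁ : EqE E a b) (h₂ : EqE E b c) : EqE E a c :=
  Relation.ReflTransGen.trans h₁ h₂

theorem EqE.symm (h : EqE E a b) : EqE E b a := by
  induction h with
  | refl => exact .refl _
  | tail _ hbc ih => exact hbc.symm.eqE.trans ih

theorem EqE.node_append_cons (h : EqE E a b) (f : F) (pre suf : List (RTerm F)) :
    EqE E (.node f (pre ++ a :: suf)) (.node f (pre ++ b :: suf)) :=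
  Relation.ReflTransGen.lift (fun x => RTerm.node f (pre ++ x :: suf))
    (fun _ _ hxy => Rew.node_append_cons hxy f pre suf) _ _ h

theorem eqE_node_of_forall₂ (f : F) {as bs : List (RTerm F)}
    (h : List.Forall₂ (EqE E) as bs) : EqE E (.node f as) (.node f bs) := by
  suffices ∀ pre, EqE E (.node f (pre ++ as)) (.node f (pre ++ bs)) by simpa using this []
  induction h with
  | nil => exact fun _ => .refl _
  | @cons a b _ _ hab _ ih =>
    intro pre
    have := ih (pre ++ [b])
    simp only [List.append_assoc, List.cons_append, List.nil_append] at this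
    exact (hab.node_append_cons f pre _).trans this

end Rewriting

section FlatInvariants

variable {ar : F → ℕ} {E : List (Pat F × Pat F)} {u v : RTerm F}

theorem Rew.isConst (hE : ∀ e ∈ E, IsFlatEq ar e) (h : Rew E u v) (hu : u.IsConst) :
    v.IsConst := by
  obtain ⟨c, rfl⟩ := hu
  rcases h.node_cases with ⟨l, r, σ, hm, hl, rfl⟩ | ⟨i, _, _, hi, -, -⟩
  · cases flatShape_of_mem hE hm with
    | var x => exact ⟨c, by simpa using hl⟩
    | @node _ g _ qs _ _ hnil _ =>
      simp only [Pat.subst_node, RTerm.node.injEq, List.map_eq_nil_iff] at hl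
      exact ⟨g, by simp [hnil.1 hl.2]⟩
  · simp at hi

theorem EqE.isConst (hE : ∀ e ∈ E, IsFlatEq ar e) (h : EqE E u v) (hu : u.IsConst) :
    v.IsConst := by
  induction h with
  | refl => exact hu
  | tail _ hst ih => exact hst.isConst hE ih

theorem Rew.exists_mem_args_eqE (hE : ∀ e ∈ E, IsFlatEq ar e) (h : Rew E u v) {a : RTerm F}
    (ha : a ∈ u.args) (hna : ¬ a.IsConst) : ∃ b ∈ v.args, EqE E a b := by
  obtain ⟨f, ws⟩ := u
  rcases h.node_cases with ⟨l, r, σ, hm, hl, rfl⟩ | ⟨i, a₀, b₀, hi, hab, rfl⟩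
  · cases flatShape_of_mem hE hm with
    | var x => exact ⟨a, by simpa [hl] using ha, .refl _⟩
    | @node _ _ ps qs hps _ _ hvar =>
      simp only [Pat.subst_node, RTerm.node.injEq] at hl
      obtain ⟨rfl, rfl⟩ := hl
      obtain ⟨p, hp, rfl⟩ := List.mem_map.1 ha
      rcases hps p hp with ⟨x, rfl⟩ | ⟨c, rfl⟩
      · refine ⟨_, ?_, .refl _⟩
        simpa only [Pat.subst_node, RTerm.args_node] using List.mem_map_of_mem ((hvar x).1 hp)
      · exact absurd ⟨c, by simp⟩ hna
  · simp only [RTerm.args_node] at ha ⊢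
    obtain ⟨j, hj⟩ := List.mem_iff_getElem?.1 ha
    have hlt : i < ws.length := (List.getElem?_eq_some_iff.1 hi).1
    by_cases hji : j = i
    · subst hji
      obtain rfl : a = a₀ := Option.some.inj (hj.symm.trans hi)
      exact ⟨b₀, List.mem_of_getElem? (List.getElem?_set_self hlt), hab.eqE⟩
    · exact ⟨a, List.mem_of_getElem? (by rwa [List.getElem?_set_ne (Ne.symm hji)]), .refl _⟩

theorem EqE.exists_mem_args_eqE (hE : ∀ e ∈ E, IsFlatEq ar e) (h : EqE E u v) {a : RTerm F}
    (ha : a ∈ u.args) (hna : ¬ a.IsConst) : ∃ b ∈ v.args, EqE E a b := by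
  induction h with
  | refl => exact ⟨a, ha, .refl _⟩
  | tail _ hst ih =>
    obtain ⟨b, hb, hab⟩ := ih
    have hnb : ¬ b.IsConst := fun hb => hna (hab.symm.isConst hE hb)
    obtain ⟨c, hc, hbc⟩ := hst.exists_mem_args_eqE hE hb hnb
    exact ⟨c, hc, hab.trans hbc⟩

end FlatInvariants

def ArgsRel (R : RTerm F → RTerm F → Prop) : RTerm F → RTerm F → Prop
  | .node f as, .node f' as' => f = f' ∧ List.Forall₂ R as as'

section Simulation

variable {ar : F → ℕ} {E : List (Pat F × Pat F)} {R : RTerm F → RTerm F → Prop}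
  {w w' v : RTerm F}

theorem ArgsRel.exists_of_rootStep (hE : ∀ e ∈ E, IsFlatEq ar e)
    (hfun : ∀ a a' b b', R a a' → R b b' → EqE E a b → EqE E a' b')
    (hconst : ∀ c : F, R (.node c []) (.node c []))
    (hw : ArgsRel R w w') (h : RootStep E w v) : ∃ v', EqE E w' v' ∧ ArgsRel R v v' := by
  obtain ⟨l, r, σ, hm, rfl, rfl⟩ := h
  cases flatShape_of_mem hE hm with
  | var x => exact ⟨w', .refl _, by simpa using hw⟩
  | @node f g ps qs hps hqs _ hvar =>
    obtain ⟨f', as'⟩ := w'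
    simp only [Pat.subst_node, ArgsRel, List.forall₂_map_left_iff] at hw
    obtain ⟨rfl, hrel⟩ := hw
    classical
    -- `R` is functional modulo `E`, so any `R`-partner of `σ x` will do
    let σ' : ℕ → RTerm F := fun x => if h : ∃ a', R (σ x) a' then h.choose else σ x
    have hσ' : ∀ x a', R (σ x) a' → R (σ x) (σ' x) := fun x a' h => by
      simp only [σ', dif_pos (⟨a', h⟩ : ∃ a', R (σ x) a')]
      exact Exists.choose_spec _
    refine ⟨(Pat.node g qs).subst σ', ?_, ?_⟩
    · have hargs : List.Forall₂ (fun p a' => EqE E a' (p.subst σ')) ps as' :=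
        ((List.forall₂_and_left _ _).2 ⟨hps, hrel⟩).imp fun p a' ⟨hp, hpa⟩ => by
          rcases hp with ⟨x, rfl⟩ | ⟨c, rfl⟩
          · simp only [Pat.subst_var] at hpa ⊢
            exact hfun _ _ _ _ hpa (hσ' x a' hpa) (.refl _)
          · simp only [Pat.subst_node, List.map_nil] at hpa ⊢
            exact hfun _ _ _ _ hpa (hconst c) (.refl _)
      have hroot : RootStep E ((Pat.node f ps).subst σ') ((Pat.node g qs).subst σ') :=
        ⟨_, _, σ', hm, rfl, rfl⟩
      refine (eqE_node_of_forall₂ f ?_).trans (by simpa using hroot.rew.eqE)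
      exact List.forall₂_map_right_iff.2 hargs.flip
    · simp only [Pat.subst_node, ArgsRel, List.forall₂_map_left_iff,
        List.forall₂_map_right_iff, List.forall₂_same, true_and]
      intro q hq
      rcases hqs q hq with ⟨x, rfl⟩ | ⟨c, rfl⟩
      · obtain ⟨a', -, ha'⟩ := hrel.exists_of_mem_left ((hvar x).2 hq)
        simp only [Pat.subst_var] at ha' ⊢
        exact hσ' x a' ha'
      · simpa using hconst c

theorem ArgsRel.exists_of_rew (hE : ∀ e ∈ E, IsFlatEq ar e)
    (hclosed : ∀ a b a', EqE E a b → R a a' → R b a')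
    (hfun : ∀ a a' b b', R a a' → R b b' → EqE E a b → EqE E a' b')
    (hconst : ∀ c : F, R (.node c []) (.node c []))
    (hw : ArgsRel R w w') (h : Rew E w v) : ∃ v', EqE E w' v' ∧ ArgsRel R v v' := by
  obtain ⟨f, as⟩ := w
  rcases h.node_cases with hroot | ⟨i, a, b, hi, hab, rfl⟩
  · exact hw.exists_of_rootStep hE hfun hconst hroot
  · obtain ⟨f', as'⟩ := w'
    obtain ⟨rfl, hrel⟩ := hw
    exact ⟨_, .refl _, rfl, hrel.set_left hi fun c => hclosed a b c hab.eqE⟩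

theorem ArgsRel.exists_of_eqE (hE : ∀ e ∈ E, IsFlatEq ar e)
    (hclosed : ∀ a b a', EqE E a b → R a a' → R b a')
    (hfun : ∀ a a' b b', R a a' → R b b' → EqE E a b → EqE E a' b')
    (hconst : ∀ c : F, R (.node c []) (.node c []))
    (hw : ArgsRel R w w') (h : EqE E w v) : ∃ v', EqE E w' v' ∧ ArgsRel R v v' := by
  induction h with
  | refl => exact ⟨w', .refl _, hw⟩
  | tail _ hst ih =>
    obtain ⟨u', hwu, hu⟩ := ih
    obtain ⟨v', huv, hv⟩ := hu.exists_of_rew hE hclosed hfun hconst hst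
    exact ⟨v', hwu.trans huv, hv⟩

theorem ArgsRel.eqE (hfun : ∀ a a' b b', R a a' → R b b' → EqE E a b → EqE E a' b')
    {w₁ w₂ : RTerm F} (h₁ : ArgsRel R w w₁) (h₂ : ArgsRel R w w₂) : EqE E w₁ w₂ := by
  obtain ⟨f, as⟩ := w
  obtain ⟨f₁, as₁⟩ := w₁
  obtain ⟨f₂, as₂⟩ := w₂
  obtain ⟨rfl, h₁⟩ := h₁
  obtain ⟨rfl, h₂⟩ := h₂
  exact eqE_node_of_forall₂ f
    (List.Forall₂.of_forall₂_left (fun a b c hb hc => hfun a b a c hb hc (.refl a)) h₁ h₂)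

theorem ArgsRel.eqE_of_eqE (hE : ∀ e ∈ E, IsFlatEq ar e)
    (hclosed : ∀ a b a', EqE E a b → R a a' → R b a')
    (hfun : ∀ a a' b b', R a a' → R b b' → EqE E a b → EqE E a' b')
    (hconst : ∀ c : F, R (.node c []) (.node c []))
    {s s' t t' : RTerm F} (hs : ArgsRel R s s') (ht : ArgsRel R t t') (h : EqE E s t) :
    EqE E s' t' := by
  obtain ⟨t'', hst'', ht''⟩ := hs.exists_of_eqE hE hclosed hfun hconst h
  exact hst''.trans (ht''.eqE hfun ht)

end Simulation

def ArgCorr (ss ts ss' ts' : List (RTerm F)) (x x' : RTerm F) : Prop :=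
  (x.IsConst ∧ x' = x) ∨ (∃ k : ℕ, ss[k]? = some x ∧ ss'[k]? = some x') ∨
    ∃ k : ℕ, ts[k]? = some x ∧ ts'[k]? = some x'

section Replacement

variable {ar : F → ℕ} {E : List (Pat F × Pat F)} {f g : F} {ss ts ss' ts' : List (RTerm F)}

theorem ArgCorr.eqE (hE : ∀ e ∈ E, IsFlatEq ar e)
    (hlen_s : ss.length = ss'.length) (hlen_t : ts.length = ts'.length)
    (hs : ∀ (k : ℕ) x x', ss[k]? = some x → ss'[k]? = some x' → x.IsConst → EqE E x x')
    (ht : ∀ (k : ℕ) y y', ts[k]? = some y → ts'[k]? = some y' → y.IsConst → EqE E y y')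
    (hst : ∀ (k l : ℕ) x x' y y', ss[k]? = some x → ss'[k]? = some x' →
      ts[l]? = some y → ts'[l]? = some y' → EqE E x y → EqE E x' y')
    (H : EqE E (.node f ss) (.node g ts)) {x x' y y' : RTerm F}
    (hx : ArgCorr ss ts ss' ts' x x') (hy : ArgCorr ss ts ss' ts' y y') (hxy : EqE E x y) :
    EqE E x' y' := by
  have hconst : ∀ {x x'}, ArgCorr ss ts ss' ts' x x' → x.IsConst → EqE E x x' := by
    rintro x x' (⟨-, rfl⟩ | ⟨k, hk, hk'⟩ | ⟨k, hk, hk'⟩) hc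
    exacts [.refl _, hs k x x' hk hk' hc, ht k x x' hk hk' hc]
  by_cases hc : x.IsConst
  · exact ((hconst hx hc).symm.trans hxy).trans (hconst hy (hxy.isConst hE hc))
  have hcy : ¬ y.IsConst := fun h => hc (hxy.symm.isConst hE h)
  have cover_s : ∀ {x}, x ∈ ss → ¬ x.IsConst →
      ∃ (l : ℕ) (z z' : RTerm F), ts[l]? = some z ∧ ts'[l]? = some z' ∧ EqE E x z := fun hx hc => by
    obtain ⟨z, hz, hxz⟩ := H.exists_mem_args_eqE hE (by simpa using hx) hc
    obtain ⟨l, z', hl, hl'⟩ := List.exists_getElem?_eq_some_of_mem hlen_t hz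
    exact ⟨l, z, z', hl, hl', hxz⟩
  have cover_t : ∀ {x}, x ∈ ts → ¬ x.IsConst →
      ∃ (k : ℕ) (z z' : RTerm F), ss[k]? = some z ∧ ss'[k]? = some z' ∧ EqE E x z := fun hx hc => by
    obtain ⟨z, hz, hxz⟩ := H.symm.exists_mem_args_eqE hE (by simpa using hx) hc
    obtain ⟨k, z', hk, hk'⟩ := List.exists_getElem?_eq_some_of_mem hlen_s hz
    exact ⟨k, z, z', hk, hk', hxz⟩
  rcases hx with ⟨hc', -⟩ | ⟨k, hk, hk'⟩ | ⟨l, hl, hl'⟩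
  · exact absurd hc' hc
  all_goals rcases hy with ⟨hc', -⟩ | ⟨m, hm, hm'⟩ | ⟨m, hm, hm'⟩
  · exact absurd hc' hcy
  · obtain ⟨l, z, z', hl, hl', hxz⟩ := cover_s (List.mem_of_getElem? hk) hc
    exact (hst k l _ _ _ _ hk hk' hl hl' hxz).trans
      (hst m l _ _ _ _ hm hm' hl hl' (hxy.symm.trans hxz)).symm
  · exact hst k m _ _ _ _ hk hk' hm hm' hxy
  · exact absurd hc' hcy
  · exact (hst m l _ _ _ _ hm hm' hl hl' hxy.symm).symm
  · obtain ⟨k, z, z', hk, hk', hxz⟩ := cover_t (List.mem_of_getElem? hl) hc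
    exact (hst k l _ _ _ _ hk hk' hl hl' hxz.symm).symm.trans
      (hst k m _ _ _ _ hk hk' hm hm' (hxz.symm.trans hxy))

theorem eqE_node_of_eqE_node (hE : ∀ e ∈ E, IsFlatEq ar e)
    (hlen_s : ss.length = ss'.length) (hlen_t : ts.length = ts'.length)
    (hs : ∀ (k : ℕ) x x', ss[k]? = some x → ss'[k]? = some x' → x.IsConst → EqE E x x')
    (ht : ∀ (k : ℕ) y y', ts[k]? = some y → ts'[k]? = some y' → y.IsConst → EqE E y y')
    (hst : ∀ (k l : ℕ) x x' y y', ss[k]? = some x → ss'[k]? = some x' →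
      ts[l]? = some y → ts'[l]? = some y' → EqE E x y → EqE E x' y')
    (H : EqE E (.node f ss) (.node g ts)) : EqE E (.node f ss') (.node g ts') := by
  let R : RTerm F → RTerm F → Prop := fun a a' =>
    ∃ x x', ArgCorr ss ts ss' ts' x x' ∧ EqE E a x ∧ EqE E a' x'
  have hclosed : ∀ a b a', EqE E a b → R a a' → R b a' :=
    fun _ _ _ hab ⟨x, x', hx, hax, hax'⟩ => ⟨x, x', hx, hab.symm.trans hax, hax'⟩
  have hfun : ∀ a a' b b', R a a' → R b b' → EqE E a b → EqE E a' b' :=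
    fun _ _ _ _ ⟨_, _, hx, hax, hax'⟩ ⟨_, _, hy, hby, hby'⟩ hab => hax'.trans <|
      (hx.eqE hE hlen_s hlen_t hs ht hst H hy (hax.symm.trans (hab.trans hby))).trans hby'.symm
  have hconst : ∀ c : F, R (.node c []) (.node c []) :=
    fun c => ⟨_, _, Or.inl ⟨⟨c, rfl⟩, rfl⟩, .refl _, .refl _⟩
  have hss : List.Forall₂ R ss ss' := List.forall₂_iff_getElem?.2
    ⟨hlen_s, fun k x x' hk hk' => ⟨x, x', Or.inr (Or.inl ⟨k, hk, hk'⟩), .refl _, .refl _⟩⟩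
  have hts : List.Forall₂ R ts ts' := List.forall₂_iff_getElem?.2
    ⟨hlen_t, fun k y y' hk hk' => ⟨y, y', Or.inr (Or.inr ⟨k, hk, hk'⟩), .refl _, .refl _⟩⟩
  exact ArgsRel.eqE_of_eqE (s := .node f ss) (t := .node g ts) hE hclosed hfun hconst
    ⟨rfl, hss⟩ ⟨rfl, hts⟩ H

end Replacement

/-- Let `E` be a flat theory, `s = f(s1,…,sn)`, `t = g(t1,…,tm)`,
`s' = f(s1',…,sn')`, `t' = g(t1',…,tm')` ground terms such that corresponding
`s_i, s_i'` (resp. `t_j, t_j'`) are simultaneously constants and then `E`-equal,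
and `s_i' =E t_j' ↔ s_i =E t_j` for all `i, j`.  Then `s =E t ↔ s' =E t'`. -/
theorem flat_theory_replacement {F : Type} (ar : F → ℕ) (E : List (Pat F × Pat F))
    (hE : ∀ e ∈ E, IsFlatEq ar e)
    (f g : F) (ss ts ss' ts' : List (RTerm F))
    (hwf₁ : RTerm.WF ar (RTerm.node f ss)) (hwf₂ : RTerm.WF ar (RTerm.node g ts))
    (hwf₃ : RTerm.WF ar (RTerm.node f ss')) (hwf₄ : RTerm.WF ar (RTerm.node g ts'))
    (hs : ∀ (k : ℕ) si si', ss[k]? = some si → ss'[k]? = some si' →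
      (RTerm.IsConst si ↔ RTerm.IsConst si') ∧
      (RTerm.IsConst si → RTerm.IsConst si' → EqE E si si'))
    (ht : ∀ (k : ℕ) tj tj', ts[k]? = some tj → ts'[k]? = some tj' →
      (RTerm.IsConst tj ↔ RTerm.IsConst tj') ∧
      (RTerm.IsConst tj → RTerm.IsConst tj' → EqE E tj tj'))
    (hst : ∀ (k l : ℕ) si si' tj tj', ss[k]? = some si → ss'[k]? = some si' →
      ts[l]? = some tj → ts'[l]? = some tj' →
      (EqE E si' tj' ↔ EqE E si tj)) :
    EqE E (RTerm.node f ss) (RTerm.node g ts) ↔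
      EqE E (RTerm.node f ss') (RTerm.node g ts') := by
  have hlen_s : ss.length = ss'.length := by
    cases hwf₁; cases hwf₃; omega
  have hlen_t : ts.length = ts'.length := by
    cases hwf₂; cases hwf₄; omega
  constructor
  · exact eqE_node_of_eqE_node hE hlen_s hlen_t
      (fun k x x' h h' hc => (hs k x x' h h').2 hc ((hs k x x' h h').1.1 hc))
      (fun k y y' h h' hc => (ht k y y' h h').2 hc ((ht k y y' h h').1.1 hc))
      (fun k l x x' y y' h₁ h₂ h₃ h₄ => (hst k l x x' y y' h₁ h₂ h₃ h₄).2)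
  · exact eqE_node_of_eqE_node hE hlen_s.symm hlen_t.symm
      (fun k x' x h' h hc => ((hs k x x' h h').2 ((hs k x x' h h').1.2 hc) hc).symm)
      (fun k y' y h' h hc => ((ht k y y' h h').2 ((ht k y y' h h').1.2 hc) hc).symm)
      (fun k l x' x y' y h₂ h₁ h₄ h₃ => (hst k l x x' y y' h₁ h₂ h₃ h₄).1)

end TreeAut
end

section
/- Let A = ⟨Q,Σ,F,Δ,E,C⟩ be a positive conjunctive TABG whose global constraint C is a conjunction of atoms q ≈ q', q ≉ q' and natural linear inequalities over the |q|. Then L(A_¬ℕ) = L(A). -/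
set_option maxHeartbeats 1000000

/-!
A run of `A_¬ℕ` is a run of `A` whose states are decorated with mappings `M`; by induction
on the run, the mapping at the root is the occurrence count of every state of `A` truncated
at `max_A`. Conversely every run of `A` can be decorated in this way, so runs of the two
automata correspond. The equality and disequality atoms of `C_¬ℕ` only look at the
undecorated states, and a natural linear inequality `Σ aᵢ|qᵢ| ≥ k` with `|k| < max_A`
has the same truth value on the counts and on their truncations at `max_A`: if some
`|qᵢ|` with `aᵢ ≠ 0` exceeds `max_A`, both sides are beyond `k`, otherwise nothing was
truncated. Hence checking the linear literals on the final state of `A_¬ℕ` is equivalent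
to checking them on the run of `A`.
-/

namespace TreeAut

section RTerm

variable {β γ δ : Type}

theorem RTerm.induction {P : RTerm β → Prop}
    (node : ∀ f ts, (∀ u ∈ ts, P u) → P (RTerm.node f ts)) : ∀ t, P t
  | .node f ts => node f ts (fun u _ => RTerm.induction node u)
decreasing_by
  simp only [RTerm.node.sizeOf_spec]
  have := List.sizeOf_lt_of_mem ‹u ∈ ts›
  omega

theorem RTerm.map_node (g : β → γ) (f : β) (ts : List (RTerm β)) :
    (RTerm.node f ts).map g = RTerm.node (g f) (ts.map (RTerm.map g)) := by
  rw [RTerm.map]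
  simp

theorem RTerm.rootLabel_map (g : β → γ) (t : RTerm β) :
    (t.map g).rootLabel = g t.rootLabel := by
  cases t
  rw [RTerm.map_node]
  rfl

theorem RTerm.map_map (g : β → γ) (h : γ → δ) (t : RTerm β) :
    (t.map g).map h = t.map (h ∘ g) := by
  induction t using RTerm.induction with
  | node f ts ih =>
    rw [RTerm.map_node, RTerm.map_node, RTerm.map_node, List.map_map]
    exact congrArg _ (List.map_congr_left ih)

theorem RTerm.subAt_map_iff {g : β → γ} {t : RTerm β} {p : List ℕ} {s' : RTerm γ} :
    RTerm.SubAt (t.map g) p s' ↔ ∃ s, RTerm.SubAt t p s ∧ s.map g = s' := by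
  constructor
  · induction p generalizing t with
    | nil =>
      intro h
      generalize ht : t.map g = t' at h
      cases h
      exact ⟨t, .refl t, ht⟩
    | cons i p ih =>
      obtain ⟨f, ts⟩ := t
      rw [RTerm.map_node]
      rintro (_ | ⟨hget, hsub⟩)
      rw [List.getElem?_map, Option.map_eq_some_iff] at hget
      obtain ⟨u, hu, rfl⟩ := hget
      obtain ⟨s, hs, rfl⟩ := ih hsub
      exact ⟨s, .step hu hs, rfl⟩
  · rintro ⟨s, hs, rfl⟩
    induction hs with
    | refl t => exact .refl _
    | step hget _ ih =>
      rw [RTerm.map_node]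
      exact .step (by rw [List.getElem?_map, hget]; rfl) ih

end RTerm

section Count

variable {β Q : Type}

def childStPos (st : β → Q) (q : Q) (ts : List (RTerm β)) : Set (List ℕ) :=
  {ip | ∃ i p u, ip = i :: p ∧ ts[i]? = some u ∧ p ∈ stPos st u q}

theorem stPos_node [DecidableEq Q] (st : β → Q) (q : Q) (b : β) (ts : List (RTerm β)) :
    stPos st (RTerm.node b ts) q =
      (if st b = q then {[]} else ∅) ∪ childStPos st q ts := by
  ext p
  constructor
  · rintro ⟨s, (_ | ⟨hget, hsub⟩), hq⟩
    · left
      simp_all [RTerm.rootLabel]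
    · exact Or.inr ⟨_, _, _, rfl, hget, _, hsub, hq⟩
  · rintro (hp | ⟨i, p, u, rfl, hget, s, hsub, hq⟩)
    · split_ifs at hp with hb
      · rw [Set.mem_singleton_iff.1 hp]
        exact ⟨_, .refl _, hb⟩
      · exact absurd hp (Set.notMem_empty _)
    · exact ⟨s, .step hget hsub, hq⟩

theorem childStPos_cons (st : β → Q) (q : Q) (u : RTerm β) (ts : List (RTerm β)) :
    childStPos st q (u :: ts) =
      List.cons 0 '' stPos st u q ∪
        (fun ip : List ℕ => (ip.headI + 1) :: ip.tail) '' childStPos st q ts := by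
  ext p
  constructor
  · rintro ⟨_ | k, p, w, rfl, hget, hp⟩
    · cases hget
      exact Or.inl ⟨p, hp, rfl⟩
    · exact Or.inr ⟨k :: p, ⟨k, p, w, rfl, hget, hp⟩, rfl⟩
  · rintro (⟨p, hp, rfl⟩ | ⟨_, ⟨i, p, w, rfl, hget, hp⟩, rfl⟩)
    · exact ⟨0, p, u, rfl, rfl, hp⟩
    · exact ⟨i + 1, p, w, rfl, hget, hp⟩

theorem childStPos_finite_and_ncard (st : β → Q) (q : Q) (ts : List (RTerm β))
    (h : ∀ u ∈ ts, (stPos st u q).Finite) :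
    (childStPos st q ts).Finite ∧
      (childStPos st q ts).ncard = (ts.map fun u => (stPos st u q).ncard).sum := by
  induction ts with
  | nil => simp [childStPos]
  | cons u ts ih =>
    obtain ⟨hfin, hcard⟩ := ih fun w hw => h w (List.mem_cons_of_mem _ hw)
    have hu : (stPos st u q).Finite := h u List.mem_cons_self
    have hdisj : Disjoint (List.cons 0 '' stPos st u q)
        ((fun ip : List ℕ => (ip.headI + 1) :: ip.tail) '' childStPos st q ts) := by
      rw [Set.disjoint_left]
      rintro _ ⟨_, _, rfl⟩ ⟨_, _, h⟩
      simp at h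
    have hinj : Set.InjOn (fun ip : List ℕ => (ip.headI + 1) :: ip.tail)
        (childStPos st q ts) := by
      rintro _ ⟨i, p, _, rfl, _⟩ _ ⟨j, p', _, rfl, _⟩ h
      simp_all
    rw [childStPos_cons]
    refine ⟨(hu.image _).union (hfin.image _), ?_⟩
    rw [Set.ncard_union_eq hdisj (hu.image _) (hfin.image _),
      Set.ncard_image_of_injective _ (List.cons_injective), hinj.ncard_image,
      hcard, List.map_cons, List.sum_cons]

theorem stPos_finite (st : β → Q) (q : Q) (t : RTerm β) : (stPos st t q).Finite := by
  classical
  induction t using RTerm.induction with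
  | node b ts ih =>
    rw [stPos_node]
    exact Set.Finite.union (by split_ifs <;> simp) (childStPos_finite_and_ncard st q ts ih).1

theorem stCount_node [DecidableEq Q] (st : β → Q) (q : Q) (b : β) (ts : List (RTerm β)) :
    stCount st (RTerm.node b ts) q =
      (if st b = q then 1 else 0) + (ts.map fun u => stCount st u q).sum := by
  obtain ⟨hfin, hcard⟩ := childStPos_finite_and_ncard st q ts fun u _ => stPos_finite st q u
  have hroot : ((if st b = q then {[]} else ∅) : Set (List ℕ)).Finite := by
    split_ifs <;> simp
  have hdisj :
      Disjoint ((if st b = q then {[]} else ∅) : Set (List ℕ)) (childStPos st q ts) := by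
    rw [Set.disjoint_left]
    rintro _ hp ⟨_, _, _, rfl, _⟩
    split_ifs at hp <;> simp_all
  rw [stCount, stPos_node, Set.ncard_union_eq hdisj hroot hfin, hcard]
  split_ifs <;> simp [stCount]

end Count

section Truncation

variable {Q : Type}

def truncMap (m : ℕ) (c : Q → ℕ) : Q → Fin (m + 1) :=
  fun q => ⟨min (c q) m, Nat.lt_succ_of_le (min_le_right _ _)⟩

theorem msumF_truncMap (m : ℕ) (c d : Q → ℕ) :
    msumF (truncMap m c) (truncMap m d) = truncMap m (c + d) := by
  funext q
  apply Fin.ext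
  simp only [msumF, truncMap, Pi.add_apply]
  omega

theorem unitMap_eq_truncMap [DecidableEq Q] (m : ℕ) (q₀ : Q) :
    unitMap m q₀ = truncMap m (fun q => if q = q₀ then 1 else 0) := by
  funext q
  apply Fin.ext
  simp only [unitMap, truncMap]
  split_ifs <;> simp

theorem foldr_msumF_truncMap (m : ℕ) (cs : List (Q → ℕ)) (c₀ : Q → ℕ) :
    (cs.map (truncMap m)).foldr msumF (truncMap m c₀) = truncMap m (c₀ + cs.sum) := by
  induction cs with
  | nil => simp
  | cons c cs ih =>
    rw [List.map_cons, List.foldr_cons, ih, msumF_truncMap, List.sum_cons, add_left_comm]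

def linVal (l : List (ℤ × Q)) (x : Q → ℕ) : ℤ :=
  (l.map fun cq => cq.1 * (x cq.2 : ℤ)).sum

theorem linVal_neg (l : List (ℤ × Q)) (x : Q → ℕ) :
    linVal (l.map fun cq => (-cq.1, cq.2)) x = -linVal l x := by
  induction l with
  | nil => simp [linVal]
  | cons cq l ih =>
    simp only [linVal, List.map_cons, List.sum_cons] at ih ⊢
    rw [ih]
    ring

theorem linVal_truncate_le {l : List (ℤ × Q)} (hl : ∀ cq ∈ l, 0 ≤ cq.1) (x : Q → ℕ)
    (m : ℕ) :
    linVal l (fun q => min (x q) m) ≤ linVal l x :=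
  List.sum_le_sum fun cq hcq =>
    mul_le_mul_of_nonneg_left (by exact_mod_cast min_le_left _ _) (hl cq hcq)

/-- With integer coefficients, one term whose count reaches `m` already pushes the
truncated sum up to `m`. -/
theorem min_linVal_le_linVal_truncate {l : List (ℤ × Q)} (hl : ∀ cq ∈ l, 0 ≤ cq.1)
    (x : Q → ℕ) (m : ℕ) :
    min (linVal l x) m ≤ linVal l (fun q => min (x q) m) := by
  induction l with
  | nil => simp [linVal]
  | cons cq l ih =>
    have hc := hl cq List.mem_cons_self
    have ih := ih fun dq hdq => hl dq (List.mem_cons_of_mem _ hdq)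
    have hrest : 0 ≤ linVal l (fun q => min (x q) m) :=
      List.sum_nonneg fun _ hz => by
        obtain ⟨dq, hdq, rfl⟩ := List.mem_map.1 hz
        exact mul_nonneg (hl dq (List.mem_cons_of_mem _ hdq)) (by positivity)
    simp only [linVal, List.map_cons, List.sum_cons] at ih hrest ⊢
    rcases le_total (x cq.2) m with hx | hx
    · rw [min_eq_left hx]
      have := mul_nonneg hc (Int.natCast_nonneg (x cq.2))
      omega
    · rw [min_eq_right hx]
      rcases hc.eq_or_lt with hc0 | hc1
      · rw [← hc0]
        simp only [zero_mul, zero_add]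
        exact le_trans (min_le_min_right _ (by simp)) ih
      · have : (m : ℤ) ≤ cq.1 * m := le_mul_of_one_le_left (by positivity) hc1
        have := min_le_right (cq.1 * (x cq.2 : ℤ) + linVal l x) m
        simp only [linVal] at *
        omega

theorem le_linVal_truncate_iff {l : List (ℤ × Q)} {a : ℤ} {m : ℕ}
    (hs : sameSign (l.map Prod.fst) a) (ham : a.natAbs < m) (x : Q → ℕ) :
    a ≤ linVal l (fun q => min (x q) m) ↔ a ≤ linVal l x := by
  rcases hs with ⟨hl, ha⟩ | ⟨hl, ha⟩
  · have hl : ∀ cq ∈ l, 0 ≤ cq.1 := fun cq hcq => hl _ (List.mem_map_of_mem hcq)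
    refine ⟨fun h => h.trans (linVal_truncate_le hl x m), fun h => ?_⟩
    exact le_trans (le_min h (by omega)) (min_linVal_le_linVal_truncate hl x m)
  · have hl' : ∀ cq ∈ l.map fun cq => (-cq.1, cq.2), 0 ≤ cq.1 := by
      simp only [List.mem_map]
      rintro _ ⟨cq, hcq, rfl⟩
      exact neg_nonneg.2 (hl _ (List.mem_map_of_mem hcq))
    have h₁ := linVal_truncate_le hl' x m
    have h₂ := min_linVal_le_linVal_truncate hl' x m
    simp only [linVal_neg] at h₁ h₂
    omega

end Truncation

section Constraint

variable {F Q β : Type} (E : List (Pat F × Pat F)) (st : β → Q) (sy : β → F) (r : RTerm β)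

theorem satGC_conjList (L : List (GC Q)) :
    satGC E st sy r (conjList L) ↔ ∀ c ∈ L, satGC E st sy r c := by
  induction L with
  | nil => simp [conjList, satGC]
  | cons c cs ih =>
    cases cs with
    | nil => simp [conjList]
    | cons d ds =>
      change satGC E st sy r c ∧ satGC E st sy r (conjList (d :: ds)) ↔ _
      rw [ih, List.forall_mem_cons (l := d :: ds)]

theorem satGC_iff_of_isConjAtoms {c : GC Q} (hconj : c.IsConjAtoms)
    (hatoms : c.AtomsAre GAtom.IsNatCnt) :
    satGC E st sy r c ↔
      (∀ qq ∈ c.eqAtoms, satAtom E st sy r (.eq qq.1 qq.2)) ∧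
      (∀ qq ∈ c.neqAtoms, satAtom E st sy r (.neq qq.1 qq.2)) ∧
      ∀ la ∈ c.cntAtoms, satAtom E st sy r (.cnt la.1 la.2) := by
  induction c with
  | tt => simp [satGC, GC.eqAtoms, GC.neqAtoms, GC.cntAtoms]
  | atom a =>
    cases a with
    | cls => exact hatoms.elim
    | _ => simp [satGC, GC.eqAtoms, GC.neqAtoms, GC.cntAtoms]
  | and c d ihc ihd =>
    change satGC E st sy r c ∧ satGC E st sy r d ↔ _
    rw [ihc hconj.1 hatoms.1, ihd hconj.2 hatoms.2]
    simp only [GC.eqAtoms, GC.neqAtoms, GC.cntAtoms, List.forall_mem_append]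
    tauto
  | ff | or | not => exact hconj.elim

theorem sameSign_of_mem_cntAtoms {c : GC Q} (hconj : c.IsConjAtoms)
    (hatoms : c.AtomsAre GAtom.IsNatCnt) {la : List (ℤ × Q) × ℤ} (hla : la ∈ c.cntAtoms) :
    sameSign (la.1.map Prod.fst) la.2 := by
  induction c with
  | atom a =>
    cases a with
    | cnt =>
      rw [GC.cntAtoms, List.mem_singleton] at hla
      exact hla ▸ hatoms
    | cls => exact hatoms.elim
    | _ => simp [GC.cntAtoms] at hla
  | and c d ihc ihd =>
    rcases List.mem_append.1 hla with h | h
    exacts [ihc hconj.1 hatoms.1 h, ihd hconj.2 hatoms.2 h]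
  | tt => simp [GC.cntAtoms] at hla
  | ff | or | not => exact hconj.elim

theorem natAbs_lt_maxConst {c : GC Q} {la : List (ℤ × Q) × ℤ} (hla : la ∈ c.cntAtoms) :
    la.2.natAbs < c.maxConst := by
  have := List.le_max_of_le (List.mem_map_of_mem (f := fun la => la.2.natAbs) hla) le_rfl
  rw [GC.maxConst]
  exact Nat.lt_one_add_iff.2 this

end Constraint

section Runs

variable {F Q Q' : Type}

def Rule.mapStates (π : Q' → Q) (ρ : Rule F Q') : Rule F Q :=
  ⟨ρ.sym, ρ.args.map π, ρ.bcEq, ρ.bcNeq, π ρ.res⟩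

theorem Run.state_map_mapStates (π : Q' → Q) (r : Run F Q') :
    Run.state (r.map (Rule.mapStates π)) = π r.state := by
  rw [Run.state, RTerm.rootLabel_map]
  rfl

theorem Run.term_map_mapStates (π : Q' → Q) (r : Run F Q') :
    Run.term (r.map (Rule.mapStates π)) = r.term := by
  rw [Run.term, RTerm.map_map]
  rfl

theorem forall_brothers_map {g : Run F Q' → Run F Q} (hg : ∀ r, (g r).term = r.term)
    (R : RTerm F → RTerm F → Prop) {bc : List (ℕ × ℕ)} {rs : List (Run F Q')}
    (h : ∀ i j ri rj, (i, j) ∈ bc → rs[i - 1]? = some ri → rs[j - 1]? = some rj →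
      R ri.term rj.term) :
    ∀ i j ri rj, (i, j) ∈ bc → (rs.map g)[i - 1]? = some ri →
      (rs.map g)[j - 1]? = some rj →
      R ri.term rj.term := by
  intro i j ri rj hij hi hj
  rw [List.getElem?_map, Option.map_eq_some_iff] at hi hj
  obtain ⟨ri, hi, rfl⟩ := hi
  obtain ⟨rj, hj, rfl⟩ := hj
  rw [hg, hg]
  exact h i j ri rj hij hi hj

theorem mem_mapM_pairs_iff {α σ : Type} [Fintype σ] (l : List α) (x : List (α × σ)) :
    x ∈ l.mapM (fun a => (Finset.univ : Finset σ).toList.map fun M => (a, M)) ↔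
      x.map Prod.fst = l := by
  induction l generalizing x with
  | nil => cases x <;> simp [pure]
  | cons a l ih =>
    cases x with
    | nil => simp [List.mapM_cons]
    | cons y x => simp [List.mapM_cons, ih, Prod.ext_iff, and_comm, eq_comm]

end Runs

section Decoration

variable {F Q : Type} [DecidableEq Q] {m : ℕ}

/-- The rule `f((q₁)_{M₁},…,(qₘ)_{Mₘ}) → q_{M₁+…+Mₘ+M_q}` of `A_¬ℕ` built from `ρ`. -/
def Rule.decorate (m : ℕ) (ρ : Rule F Q) (args : List (Q × (Q → Fin (m + 1)))) :
    Rule F (Q × (Q → Fin (m + 1))) :=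
  ⟨ρ.sym, args, ρ.bcEq, ρ.bcNeq,
    (ρ.res, (args.map Prod.snd).foldr msumF (unitMap m ρ.res))⟩

theorem Rule.mem_notNVars_iff [Fintype Q] {ρ : Rule F Q}
    {ρ' : Rule F (Q × (Q → Fin (m + 1)))} :
    ρ' ∈ ρ.notNVars m ↔
      ∃ args, args.map Prod.fst = ρ.args ∧ ρ.decorate m args = ρ' := by
  simp only [Rule.notNVars, List.mem_map, mem_mapM_pairs_iff]
  rfl

theorem Rule.mapStates_decorate {ρ : Rule F Q} {args : List (Q × (Q → Fin (m + 1)))}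
    (h : args.map Prod.fst = ρ.args) : (ρ.decorate m args).mapStates Prod.fst = ρ := by
  rw [Rule.mapStates, Rule.decorate, h]

theorem isRun_map_fst [Fintype Q] {Δ : List (Rule F Q)} {E : List (Pat F × Pat F)}
    {r' : Run F (Q × (Q → Fin (m + 1)))} (h : IsRun (Δ.flatMap (Rule.notNVars m)) E r') :
    IsRun Δ E (r'.map (Rule.mapStates Prod.fst)) := by
  induction h with
  | @node ρ' rs' hρ' hargs _ hbe hbn ih =>
    obtain ⟨ρ, hρ, hmem⟩ := List.mem_flatMap.1 hρ'
    obtain ⟨args, hfst, rfl⟩ := Rule.mem_notNVars_iff.1 hmem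
    rw [RTerm.map_node, Rule.mapStates_decorate hfst]
    refine .node hρ ?_ ?_ ?_ ?_
    · rw [← hfst, show args = (ρ.decorate m args).args from rfl, hargs, List.map_map,
        List.map_map]
      exact List.map_congr_left fun s _ => (Run.state_map_mapStates Prod.fst s).symm
    · simpa using ih
    · exact forall_brothers_map (Run.term_map_mapStates Prod.fst) (EqE E) hbe
    · exact forall_brothers_map (Run.term_map_mapStates Prod.fst) (fun s t => ¬ EqE E s t) hbn

def annotate (m : ℕ) : Run F Q → Run F (Q × (Q → Fin (m + 1)))
  | .node ρ rs =>
    RTerm.node (ρ.decorate m ((rs.attach.map fun u => annotate m u.1).map Run.state))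
      (rs.attach.map fun u => annotate m u.1)
decreasing_by
  all_goals
    simp only [RTerm.node.sizeOf_spec]
    have := List.sizeOf_lt_of_mem u.2
    omega

theorem annotate_node (m : ℕ) (ρ : Rule F Q) (rs : List (Run F Q)) :
    annotate m (.node ρ rs) =
      RTerm.node (ρ.decorate m ((rs.map (annotate m)).map Run.state)) (rs.map (annotate m)) := by
  rw [annotate]
  simp

theorem annotate_term (m : ℕ) (r : Run F Q) : (annotate m r).term = r.term := by
  induction r using RTerm.induction with
  | node ρ rs ih =>
    simp only [Run.term, annotate_node, RTerm.map_node, List.map_map] at ih ⊢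
    exact congrArg _ (List.map_congr_left ih)

theorem annotate_state_fst (m : ℕ) (r : Run F Q) : (annotate m r).state.1 = r.state := by
  cases r
  rw [annotate_node]
  rfl

theorem map_fst_annotate {Δ : List (Rule F Q)} {E : List (Pat F × Pat F)} {r : Run F Q}
    (h : IsRun Δ E r) : (annotate m r).map (Rule.mapStates Prod.fst) = r := by
  induction h with
  | @node ρ rs _ hargs _ _ _ ih =>
    have hfst : ((rs.map (annotate m)).map Run.state).map Prod.fst = ρ.args := by
      rw [hargs, List.map_map, List.map_map]
      exact List.map_congr_left fun s _ => annotate_state_fst m s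
    rw [annotate_node, RTerm.map_node, Rule.mapStates_decorate hfst, List.map_map]
    exact congrArg _ ((List.map_congr_left ih).trans (List.map_id' rs))

theorem isRun_annotate [Fintype Q] {Δ : List (Rule F Q)} {E : List (Pat F × Pat F)}
    {r : Run F Q} (h : IsRun Δ E r) : IsRun (Δ.flatMap (Rule.notNVars m)) E (annotate m r) := by
  induction h with
  | @node ρ rs hρ hargs _ hbe hbn ih =>
    rw [annotate_node]
    refine .node (List.mem_flatMap.2 ⟨ρ, hρ, Rule.mem_notNVars_iff.2 ⟨_, ?_, rfl⟩⟩) rfl ?_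
      (forall_brothers_map (annotate_term m) (EqE E) hbe)
      (forall_brothers_map (annotate_term m) (fun s t => ¬ EqE E s t) hbn)
    · rw [hargs, List.map_map, List.map_map]
      exact List.map_congr_left fun s _ => annotate_state_fst m s
    · simpa using ih

theorem state_snd_eq_truncMap [Fintype Q] {Δ : List (Rule F Q)} {E : List (Pat F × Pat F)}
    {r' : Run F (Q × (Q → Fin (m + 1)))} (h : IsRun (Δ.flatMap (Rule.notNVars m)) E r') :
    r'.state.2 = truncMap m (stCount Rule.res (r'.map (Rule.mapStates Prod.fst))) := by
  induction h with
  | @node ρ' rs' hρ' hargs _ _ _ ih =>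
    obtain ⟨ρ, _, hmem⟩ := List.mem_flatMap.1 hρ'
    obtain ⟨args, hfst, rfl⟩ := Rule.mem_notNVars_iff.1 hmem
    change (args.map Prod.snd).foldr msumF (unitMap m ρ.res) = _
    have hcounts : (args.map Prod.snd) =
        (rs'.map fun s => stCount Rule.res (s.map (Rule.mapStates Prod.fst))).map
          (truncMap m) := by
      rw [show args = (ρ.decorate m args).args from rfl, hargs, List.map_map, List.map_map]
      exact List.map_congr_left ih
    rw [hcounts, unitMap_eq_truncMap, foldr_msumF_truncMap, RTerm.map_node]
    congr 1
    funext q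
    simp [stCount_node, Rule.decorate, Rule.mapStates, Pi.list_sum_apply, Function.comp_def,
      eq_comm]

end Decoration

section Acceptance

variable {F Q : Type}

theorem forall_pairs_map_fst_iff {S : Type} (P : RTerm F → RTerm F → Prop)
    (r' : Run F (Q × S)) (q q' : Q) :
    (∀ p p' s s', p ≠ p' → RTerm.SubAt (r'.map (Rule.mapStates Prod.fst)) p s →
      RTerm.SubAt (r'.map (Rule.mapStates Prod.fst)) p' s' →
      Rule.res s.rootLabel = q → Rule.res s'.rootLabel = q' →
      P (s.map Rule.sym) (s'.map Rule.sym)) ↔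
    ∀ M M' : S, ∀ p p' s s', p ≠ p' → RTerm.SubAt r' p s → RTerm.SubAt r' p' s' →
      Rule.res s.rootLabel = (q, M) → Rule.res s'.rootLabel = (q', M') →
      P (s.map Rule.sym) (s'.map Rule.sym) := by
  simp only [RTerm.subAt_map_iff]
  constructor
  · intro H M M' p p' s s' hne hs hs' hq hq'
    have := H p p' _ _ hne ⟨s, hs, rfl⟩ ⟨s', hs', rfl⟩
      (by rw [RTerm.rootLabel_map, Rule.mapStates, hq])
      (by rw [RTerm.rootLabel_map, Rule.mapStates, hq'])
    rwa [← Run.term, ← Run.term, Run.term_map_mapStates, Run.term_map_mapStates] at this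
  · rintro H p p' _ _ hne ⟨s, hs, rfl⟩ ⟨s', hs', rfl⟩ hq hq'
    rw [RTerm.rootLabel_map] at hq hq'
    rw [← Run.term, ← Run.term, Run.term_map_mapStates, Run.term_map_mapStates]
    exact H _ _ p p' s s' hne hs hs' (Prod.ext hq rfl) (Prod.ext hq' rfl)

variable [Fintype Q] [DecidableEq Q] (A : TABG F Q)

theorem TABG.notN_eqs : A.notN.eqs = A.eqs := rfl

theorem mem_notN_final_iff (x : Q × (Q → Fin (A.gc.maxConst + 1))) :
    x ∈ A.notN.final ↔
      x.1 ∈ A.final ∧ ∀ la ∈ A.gc.cntAtoms, la.2 ≤ lvalF x.2 la.1 := by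
  simp [TABG.notN, Prod.ext_iff]

theorem satGC_notN_iff (r' : Run F (Q × (Q → Fin (A.gc.maxConst + 1)))) :
    satGC A.eqs Rule.res Rule.sym r' A.notN.gc ↔
      (∀ qq ∈ A.gc.eqAtoms, satAtom A.eqs Rule.res Rule.sym
        (r'.map (Rule.mapStates Prod.fst)) (.eq qq.1 qq.2)) ∧
      ∀ qq ∈ A.gc.neqAtoms, satAtom A.eqs Rule.res Rule.sym
        (r'.map (Rule.mapStates Prod.fst)) (.neq qq.1 qq.2) := by
  change satGC _ _ _ _ (conjList _) ∧ satGC _ _ _ _ (conjList _) ↔ _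
  simp only [satGC_conjList, List.forall_mem_flatMap, List.forall_mem_map, Finset.mem_toList,
    Finset.mem_univ, forall_const, satGC]
  exact and_congr (forall₂_congr fun qq _ => (forall_pairs_map_fst_iff _ r' _ _).symm)
    (forall₂_congr fun qq _ =>
      (forall_pairs_map_fst_iff (fun s t => ¬ EqE A.eqs s t) r' _ _).symm)

theorem isAccRun_notN_iff (hconj : A.gc.IsConjAtoms) (hatoms : A.gc.AtomsAre GAtom.IsNatCnt)
    {r' : Run F (Q × (Q → Fin (A.gc.maxConst + 1)))} (hr' : IsRun A.notN.rules A.eqs r') :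
    A.notN.IsAccRun r' ↔ A.IsAccRun (r'.map (Rule.mapStates Prod.fst)) := by
  have hcnt : ∀ la ∈ A.gc.cntAtoms, la.2 ≤ lvalF r'.state.2 la.1 ↔
      satAtom A.eqs Rule.res Rule.sym (r'.map (Rule.mapStates Prod.fst)) (.cnt la.1 la.2) := by
    intro la hla
    rw [state_snd_eq_truncMap hr']
    exact le_linVal_truncate_iff (sameSign_of_mem_cntAtoms hconj hatoms hla)
      (natAbs_lt_maxConst hla) _
  rw [TABG.IsAccRun, TABG.IsAccRun, TABG.notN_eqs, satGC_notN_iff, mem_notN_final_iff,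
    forall₂_congr hcnt, satGC_iff_of_isConjAtoms _ _ _ _ hconj hatoms, Run.state_map_mapStates]
  exact ⟨fun ⟨_, ⟨he, hn⟩, hf, hc⟩ => ⟨isRun_map_fst hr', ⟨he, hn, hc⟩, hf⟩,
    fun ⟨_, ⟨he, hn, hc⟩, hf⟩ => ⟨hr', ⟨he, hn⟩, hf, hc⟩⟩

end Acceptance

theorem notN_preserves_language_general {F Q : Type} [Fintype Q] [DecidableEq Q]
    (A : TABG F Q) (hconj : A.gc.IsConjAtoms) (hatoms : A.gc.AtomsAre GAtom.IsNatCnt) :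
    (A.notN).Lang = A.Lang := by
  ext t
  constructor
  · rintro ⟨r', hacc, rfl⟩
    exact ⟨_, (isAccRun_notN_iff A hconj hatoms hacc.1).1 hacc, Run.term_map_mapStates _ r'⟩
  · rintro ⟨r, hacc, rfl⟩
    have hrun : IsRun A.notN.rules A.eqs (annotate A.gc.maxConst r) := isRun_annotate hacc.1
    refine ⟨_, (isAccRun_notN_iff A hconj hatoms hrun).2 ?_, annotate_term _ r⟩
    rwa [map_fst_annotate hacc.1]

/-- For a positive conjunctive TABG `A` whose global
constraint is a conjunction of atoms `q ≈ q'`, `q ≉ q'` and natural linear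
inequalities over the `|q|` only, the automaton `A_¬ℕ` (whose states count the
occurrences of the states of `A` up to `max_A`) has the same language:
`L(A_¬ℕ) = L(A)`. -/
theorem notN_preserves_language {F Q : Type} [Fintype Q] [DecidableEq Q]
    (A : TABG F Q) (hwf : A.WF) (hstQ : A.stQ = Finset.univ)
    (hconj : A.gc.IsConjAtoms) (hatoms : A.gc.AtomsAre GAtom.IsNatCnt) :
    (A.notN).Lang = A.Lang :=
  notN_preserves_language_general A hconj hatoms

end TreeAut
end
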